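/- arXiv:2307.07095 — 6 statements merged into one kernel-verified Lean document; each statement's English description precedes it below -/
import Mathlib

section
/- In a finite simple graph, every generating set contains every simplicial vertex. That is, if S is a set of vertices whose geodetic convex hull is the whole vertex set, then every simplicial vertex of the graph belongs to S. -/
open SimpleGraph

variable {V : Type*}

/-- `w` lies on a geodesic (shortest path) between `u` and `v` in `G`. -/
def OnGeodesic (G : SimpleGraph V) (u v w : V) : Prop :=
  ∃ p : G.Walk u v, p.IsPath ∧ p.length = G.dist u v ∧ w ∈ p.support

/-- A set of vertices is geodetically convex if it contains every vertex lying on a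
geodesic between two of its elements. -/
def GeoConvex (G : SimpleGraph V) (S : Set V) : Prop :=
  ∀ ⦃u⦄, u ∈ S → ∀ ⦃v⦄, v ∈ S → ∀ ⦃w⦄, OnGeodesic G u v w → w ∈ S

/-- The geodetic convex hull of a set of vertices: the smallest geodetically convex
set containing it. -/
def geoHull (G : SimpleGraph V) (S : Set V) : Set V :=
  ⋂₀ {K : Set V | S ⊆ K ∧ GeoConvex G K}

/-- A set of vertices is generating if its convex hull is the whole vertex set. -/
def GeoGenerates (G : SimpleGraph V) (S : Set V) : Prop :=
  geoHull G S = Set.univ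

/-- A maximal nongenerating set: a nongenerating set not properly contained in any
nongenerating set.  The family of these is `𝒩(G)`. -/
def MaxNongen (G : SimpleGraph V) (N : Set V) : Prop :=
  ¬ GeoGenerates G N ∧ ∀ M : Set V, ¬ GeoGenerates G M → N ⊆ M → N = M

/-- The Frattini subset `Φ(G)`: the intersection of all maximal nongenerating sets. -/
def geoFrattini (G : SimpleGraph V) : Set V :=
  ⋂₀ {N : Set V | MaxNongen G N}

/-- A vertex is simplicial if its neighbors induce a complete graph. -/
def Simplicial (G : SimpleGraph V) (v : V) : Prop :=
  ∀ ⦃u w : V⦄, G.Adj v u → G.Adj v w → u ≠ w → G.Adj u w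

/-- A minimal generating set: a generating set no proper subset of which generates.
The family of these is `𝒢(G)`. -/
def MinGen (G : SimpleGraph V) (L : Set V) : Prop :=
  GeoGenerates G L ∧ ∀ M : Set V, GeoGenerates G M → M ⊆ L → M = L

lemma simplicial_not_interior {V : Type*} (G : SimpleGraph V) {v : V}
    (hv : Simplicial G v) {u u' : V} (p : G.Walk u u') (hlen : p.length = G.dist u u')
    (hm : v ∈ p.support) (hu : v ≠ u) (hu' : v ≠ u') : False := by
  classical
  have hspec := p.take_spec hm
  have hlen2 : (p.takeUntil v hm).length + (p.dropUntil v hm).length = p.length := by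
    have := congrArg SimpleGraph.Walk.length hspec
    rw [SimpleGraph.Walk.length_append] at this
    exact this
  obtain ⟨a, ha, r, hr⟩ := SimpleGraph.Walk.exists_eq_cons_of_ne hu
    (p.takeUntil v hm).reverse
  obtain ⟨b, hb, s, hs⟩ := SimpleGraph.Walk.exists_eq_cons_of_ne hu' (p.dropUntil v hm)
  have hrl : r.length + 1 = (p.takeUntil v hm).length := by
    have := congrArg SimpleGraph.Walk.length hr
    simpa [SimpleGraph.Walk.length_reverse, add_comm] using this.symm
  have hsl : s.length + 1 = (p.dropUntil v hm).length := by
    have := congrArg SimpleGraph.Walk.length hs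
    simpa using this.symm
  by_cases hab : a = b
  · subst hab
    have hw : G.dist u u' ≤ (r.reverse.append s).length := G.dist_le _
    rw [SimpleGraph.Walk.length_append, SimpleGraph.Walk.length_reverse] at hw
    omega
  · have hadj : G.Adj a b := hv ha hb hab
    have hw : G.dist u u' ≤ (r.reverse.append (SimpleGraph.Walk.cons hadj s)).length :=
      G.dist_le _
    rw [SimpleGraph.Walk.length_append, SimpleGraph.Walk.length_reverse,
      SimpleGraph.Walk.length_cons] at hw
    omega

/-- In a finite simple graph, every generating set contains every
simplicial vertex. -/
theorem mem_of_generates_of_simplicial {V : Type*} [Fintype V] (G : SimpleGraph V)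
    (S : Set V) (hS : GeoGenerates G S) (v : V) (hv : Simplicial G v) : v ∈ S := by
  by_contra hvS
  have hKconv : GeoConvex G ({v}ᶜ : Set V) := by
    intro x hx y hy w hw
    rcases hw with ⟨p, hp, hlen, hmem⟩
    intro hwv
    rw [Set.mem_singleton_iff] at hwv
    subst hwv
    exact simplicial_not_interior G hv p hlen hmem
      (fun h => hx (by simp [h])) (fun h => hy (by simp [h]))
  have hsub : geoHull G S ⊆ ({v}ᶜ : Set V) :=
    Set.sInter_subset_of_mem ⟨fun x hx => fun h => hvS (Set.mem_singleton_iff.mp h ▸ hx), hKconv⟩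
  rw [hS] at hsub
  exact hsub (Set.mem_univ v) rfl
end

section
/- If a finite simple graph G is vertex-transitive, i.e., for any two vertices u and v there is a graph automorphism of G sending u to v, then the Frattini subset of G is empty: Φ(G) = ∅. -/
open SimpleGraph

variable {V : Type*}

section Aux

variable {G : SimpleGraph V}

lemma aux_dist_le (φ : G ≃g G) (u v : V) : G.dist (φ u) (φ v) ≤ G.dist u v := by
  by_cases hr : G.Reachable u v
  · obtain ⟨p, hp⟩ := hr.exists_walk_length_eq_dist
    calc G.dist (φ u) (φ v) ≤ (p.map φ.toHom).length := SimpleGraph.dist_le _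
    _ = G.dist u v := by rw [SimpleGraph.Walk.length_map, hp]
  · have : ¬ G.Reachable (φ u) (φ v) := by
      intro ⟨q⟩
      exact hr ⟨(q.map φ.symm.toHom).copy (φ.symm_apply_apply u) (φ.symm_apply_apply v)⟩
    rw [SimpleGraph.dist_eq_zero_of_not_reachable this]
    exact Nat.zero_le _

lemma aux_dist_eq (φ : G ≃g G) (u v : V) : G.dist (φ u) (φ v) = G.dist u v := by
  refine le_antisymm (aux_dist_le φ u v) ?_
  have := aux_dist_le φ.symm (φ u) (φ v)
  simpa using this

lemma aux_onGeodesic_map (φ : G ≃g G) {u v w : V} (h : OnGeodesic G u v w) :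
    OnGeodesic G (φ u) (φ v) (φ w) := by
  obtain ⟨p, hp, hl, hw⟩ := h
  refine ⟨p.map φ.toHom, p.map_isPath_of_injective φ.injective hp, ?_, ?_⟩
  · rw [SimpleGraph.Walk.length_map, hl, aux_dist_eq]
  · rw [SimpleGraph.Walk.support_map]
    exact List.mem_map_of_mem hw

lemma aux_convex_image (φ : G ≃g G) {K : Set V} (hK : GeoConvex G K) :
    GeoConvex G (φ '' K) := by
  rintro _ ⟨a, ha, rfl⟩ _ ⟨b, hb, rfl⟩ w hw
  have : OnGeodesic G a b (φ.symm w) := by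
    have := aux_onGeodesic_map φ.symm hw
    simpa using this
  exact ⟨φ.symm w, hK ha hb this, φ.apply_symm_apply w⟩

lemma aux_hull_image_subset (φ : G ≃g G) (S : Set V) :
    geoHull G (φ '' S) ⊆ φ '' geoHull G S := by
  intro x hx
  exact hx (φ '' geoHull G S)
    ⟨Set.image_mono (fun s hs => fun K hK => hK.1 hs),
     aux_convex_image φ (fun u hu v hv w hw K hK => hK.2 (hu K hK) (hv K hK) hw)⟩

lemma aux_hull_image (φ : G ≃g G) (S : Set V) :
    geoHull G (φ '' S) = φ '' geoHull G S := by
  refine subset_antisymm (aux_hull_image_subset φ S) ?_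
  have h2 := aux_hull_image_subset φ.symm (φ '' S)
  have himg : φ.symm '' (φ '' S) = S := by
    rw [Set.image_image,
      show (fun a => φ.symm (φ a)) = id from funext fun a => φ.symm_apply_apply a,
      Set.image_id]
  rw [himg] at h2
  intro x hx
  obtain ⟨a, ha, rfl⟩ := hx
  have : φ.symm (φ a) ∈ φ.symm '' geoHull G (φ '' S) := by
    rw [φ.symm_apply_apply]
    exact h2 ha
  obtain ⟨b, hb, hba⟩ := this
  have : b = φ a := by
    have := congrArg φ hba
    simpa using this
  exact this ▸ hb

lemma aux_gen_image (φ : G ≃g G) (S : Set V) :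
    GeoGenerates G (φ '' S) ↔ GeoGenerates G S := by
  unfold GeoGenerates
  rw [aux_hull_image]
  constructor
  · intro hh
    have : φ.symm '' (φ '' geoHull G S) = φ.symm '' Set.univ := by rw [hh]
    rwa [Set.image_image, Set.image_univ, Set.range_eq_univ.mpr φ.symm.surjective,
      show (fun a => φ.symm (φ a)) = id from funext fun a => φ.symm_apply_apply a,
      Set.image_id] at this
  · intro hh
    rw [hh, Set.image_univ, Set.range_eq_univ.mpr φ.surjective]

lemma aux_maxNongen_image (φ : G ≃g G) {N : Set V} (hN : MaxNongen G N) :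
    MaxNongen G (φ '' N) := by
  refine ⟨fun hg => hN.1 ((aux_gen_image φ N).mp hg), ?_⟩
  intro M hM hsub
  have himg : φ.symm '' M = N := by
    refine (hN.2 (φ.symm '' M) ?_ ?_).symm
    · intro hg
      apply hM
      have := (aux_gen_image φ (φ.symm '' M)).mpr hg
      rwa [Set.image_image,
        show (fun a => φ (φ.symm a)) = id from funext fun a => φ.apply_symm_apply a,
        Set.image_id] at this
    · intro n hn
      exact ⟨φ n, hsub ⟨n, hn, rfl⟩, φ.symm_apply_apply n⟩
  rw [← himg, Set.image_image,
    show (fun a => φ (φ.symm a)) = id from funext fun a => φ.apply_symm_apply a,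
    Set.image_id]

lemma aux_univ_gen : GeoGenerates G (Set.univ : Set V) := by
  apply subset_antisymm (Set.subset_univ _)
  intro x _
  intro K hK
  exact hK.1 (Set.mem_univ x)

lemma aux_empty_nongen [Nonempty V] : ¬ GeoGenerates G (∅ : Set V) := by
  intro hg
  have : geoHull G (∅ : Set V) ⊆ ∅ :=
    Set.sInter_subset_of_mem ⟨Set.Subset.rfl, fun u hu => absurd hu (Set.notMem_empty u)⟩
  rw [hg] at this
  exact Set.notMem_empty (Classical.arbitrary V) (this (Set.mem_univ _))

lemma aux_exists_maxNongen [Fintype V] [Nonempty V] : ∃ N : Set V, MaxNongen G N := by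
  have hfin : ({M : Set V | ¬ GeoGenerates G M}).Finite := Set.toFinite _
  have hne : ({M : Set V | ¬ GeoGenerates G M}).Nonempty := ⟨∅, aux_empty_nongen⟩
  obtain ⟨N, hN, hmax⟩ := Set.Finite.exists_maximalFor id _ hfin hne
  exact ⟨N, hN, fun M hM hsub => subset_antisymm hsub (hmax hM hsub)⟩

end Aux

/-- If `G` is vertex-transitive, then its Frattini subset is empty. -/
theorem geoFrattini_eq_empty_of_vertexTransitive {V : Type*} [Fintype V]
    (G : SimpleGraph V) (h : ∀ u v : V, ∃ φ : G ≃g G, φ u = v) :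
    geoFrattini G = ∅ := by
  ext x
  simp only [Set.mem_empty_iff_false, iff_false]
  intro hx
  have : Nonempty V := ⟨x⟩
  obtain ⟨N, hN⟩ := aux_exists_maxNongen (G := G)
  have hNne : N ≠ Set.univ := fun he => hN.1 (he ▸ aux_univ_gen)
  obtain ⟨y, hy⟩ : ∃ y, y ∉ N := by
    by_contra hc
    push_neg at hc
    exact hNne (Set.eq_univ_of_forall hc)
  obtain ⟨φ, hφ⟩ := h x y
  have hmax : MaxNongen G (φ.symm '' N) := aux_maxNongen_image φ.symm hN
  have hxin : x ∈ φ.symm '' N := hx _ hmax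
  obtain ⟨n, hn, hnx⟩ := hxin
  have : n = y := by
    have := congrArg φ hnx
    rw [φ.apply_symm_apply, hφ] at this
    exact this
  exact hy (this ▸ hn)
end

section
/- For the disjoint union G ∪̇ H of two finite simple graphs G and H (identifying its vertex set with the disjoint union of V(G) and V(H)), the maximal nongenerating sets are exactly 𝒩(G ∪̇ H) = { N ∪ V(H) : N ∈ 𝒩(G) } ∪ { V(G) ∪ N : N ∈ 𝒩(H) }. -/
open SimpleGraph

variable {V : Type*}

/-!
Geodesics of `G ⊕g H` never leave a summand, and inside a summand they are exactly the
geodesics of that summand. So a set is convex iff both of its traces `inl ⁻¹' S`, `inr ⁻¹' S`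
are, hulls are computed summandwise, and a set generates iff both traces generate. Under
`Set (α ⊕ β) ≃o Set α × Set β` the nongenerating sets become the pairs `(A, B)` with `A` or `B`
nongenerating; since `univ` generates, a maximal such pair has one coordinate `univ` and the
other maximal nongenerating.
-/

theorem Prod.maximal_not_and_iff {α β : Type*} [PartialOrder α] [PartialOrder β] [OrderTop α]
    [OrderTop β] {P : α → Prop} {Q : β → Prop} (hP : P ⊤) (hQ : Q ⊤) {x : α × β} :
    Maximal (fun y ↦ ¬(P y.1 ∧ Q y.2)) x ↔
      (Maximal (¬P ·) x.1 ∧ x.2 = ⊤) ∨ (x.1 = ⊤ ∧ Maximal (¬Q ·) x.2) := by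
  obtain ⟨a, b⟩ := x
  constructor
  · intro h
    by_cases ha : P a
    · have hb : ¬Q b := fun hb ↦ h.prop ⟨ha, hb⟩
      refine .inr ⟨top_le_iff.mp (h.2 (y := (⊤, b)) (by simp [hb]) ⟨le_top, le_rfl⟩).1,
        hb, fun b' hb' hbb' ↦ (h.2 (y := (a, b')) (by simp [hb']) ⟨le_rfl, hbb'⟩).2⟩
    · refine .inl ⟨⟨ha, fun a' ha' haa' ↦ (h.2 (y := (a', b)) (by simp [ha']) ⟨haa', le_rfl⟩).1⟩,
        top_le_iff.mp (h.2 (y := (a, ⊤)) (by simp [ha]) ⟨le_rfl, le_top⟩).2⟩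
  · rintro (⟨ha, rfl⟩ | ⟨rfl, hb⟩)
    · refine ⟨fun h ↦ ha.prop h.1, fun ⟨a', b'⟩ h' hle ↦ ⟨ha.2 (fun h ↦ h' ⟨h, ?_⟩) hle.1, le_top⟩⟩
      rwa [top_le_iff.mp hle.2]
    · refine ⟨fun h ↦ hb.prop h.2, fun ⟨a', b'⟩ h' hle ↦ ⟨le_top, hb.2 (fun h ↦ h' ⟨?_, h⟩) hle.2⟩⟩
      rwa [top_le_iff.mp hle.1]

theorem OrderIso.maximal_apply_iff {α β : Type*} [Preorder α] [Preorder β] (e : α ≃o β)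
    {P : β → Prop} {x : α} : Maximal P (e x) ↔ Maximal (fun y ↦ P (e y)) x :=
  e.toOrderEmbedding.maximal_apply_mem_iff (t := {y | P y}) (by simp)

section

open Sum

variable {α β : Type*}

theorem exists_eq_image_inl_union_range_inr_iff {p : Set α → Prop} {N : Set (α ⊕ β)} :
    (∃ M, p M ∧ N = inl '' M ∪ Set.range inr) ↔ p (inl ⁻¹' N) ∧ inr ⁻¹' N = Set.univ := by
  constructor
  · rintro ⟨M, hM, rfl⟩
    simpa [Set.preimage_image_eq _ inl_injective] using hM
  · rintro ⟨hN, hN'⟩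
    refine ⟨_, hN, ?_⟩
    rw [← Set.image_univ, ← hN', Set.image_preimage_inl_union_image_preimage_inr]

theorem exists_eq_range_inl_union_image_inr_iff {p : Set β → Prop} {N : Set (α ⊕ β)} :
    (∃ M, p M ∧ N = Set.range inl ∪ inr '' M) ↔ inl ⁻¹' N = Set.univ ∧ p (inr ⁻¹' N) := by
  constructor
  · rintro ⟨M, hM, rfl⟩
    simpa [Set.preimage_image_eq _ inr_injective] using hM
  · rintro ⟨hN', hN⟩
    refine ⟨_, hN, ?_⟩
    rw [← Set.image_univ, ← hN', Set.image_preimage_inl_union_image_preimage_inr]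

end

theorem maxNongen_iff_maximal {G : SimpleGraph V} {N : Set V} :
    MaxNongen G N ↔ Maximal (¬GeoGenerates G ·) N := by
  rw [MaxNongen, maximal_iff]

theorem onGeodesic_iff {G : SimpleGraph V} {u v w : V} :
    OnGeodesic G u v w ↔ ∃ p : G.Walk u v, p.length = G.dist u v ∧ w ∈ p.support :=
  ⟨fun ⟨p, _, hp, hw⟩ ↦ ⟨p, hp, hw⟩, fun ⟨p, hp, hw⟩ ↦ ⟨p, p.isPath_of_length_eq_dist hp, hp, hw⟩⟩

section Hull

variable {G : SimpleGraph V} {S K : Set V}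

theorem subset_geoHull : S ⊆ geoHull G S :=
  fun _ hx ↦ Set.mem_sInter.mpr fun _ hK ↦ hK.1 hx

theorem geoHull_subset (hSK : S ⊆ K) (hK : GeoConvex G K) : geoHull G S ⊆ K :=
  Set.sInter_subset_of_mem ⟨hSK, hK⟩

theorem geoConvex_geoHull : GeoConvex G (geoHull G S) := fun _ hu _ hv _ hw ↦
  Set.mem_sInter.mpr fun K hK ↦ hK.2 (Set.mem_sInter.mp hu K hK) (Set.mem_sInter.mp hv K hK) hw

theorem geoGenerates_univ : GeoGenerates G Set.univ :=
  Set.eq_univ_of_univ_subset subset_geoHull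

end Hull

namespace SimpleGraph.Embedding

variable {W : Type*} {G : SimpleGraph V} {G' : SimpleGraph W} (f : G ↪g G')

theorem exists_walk_lift (hf : ∀ a y, G'.Adj (f a) y → y ∈ Set.range f) {x y : W}
    (p : G'.Walk x y) {u : V} (hu : f u = x) :
    ∃ v, ∃ q : G.Walk u v, f v = y ∧ q.length = p.length ∧ q.support.map f = p.support := by
  induction p generalizing u with
  | nil => exact ⟨u, .nil, hu, rfl, by simp [hu]⟩
  | cons h p ih =>
    subst hu
    obtain ⟨z, rfl⟩ := hf _ _ h
    obtain ⟨v, q, hv, hlen, hsupp⟩ := ih rfl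
    exact ⟨v, .cons (f.map_adj_iff.mp h) q, hv, by simp [hlen], by simp [hsupp]⟩

theorem dist_map (hf : ∀ a y, G'.Adj (f a) y → y ∈ Set.range f) (u v : V) :
    G'.dist (f u) (f v) = G.dist u v := by
  suffices Set.range (Walk.length : G'.Walk (f u) (f v) → ℕ) = Set.range (Walk.length) by
    rw [dist_eq_sInf, dist_eq_sInf, this]
  ext n
  constructor
  · rintro ⟨p, rfl⟩
    obtain ⟨v', q, hv', hlen, -⟩ := f.exists_walk_lift hf p rfl
    obtain rfl := f.injective hv'
    exact ⟨q, hlen⟩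
  · rintro ⟨q, rfl⟩
    exact ⟨q.map f.toHom, q.length_map _⟩

theorem onGeodesic_map_iff (hf : ∀ a y, G'.Adj (f a) y → y ∈ Set.range f) {u v : V} {w : W} :
    OnGeodesic G' (f u) (f v) w ↔ ∃ w', f w' = w ∧ OnGeodesic G u v w' := by
  simp only [onGeodesic_iff, ← f.dist_map hf]
  constructor
  · rintro ⟨p, hp, hw⟩
    obtain ⟨v', q, hv', hlen, hsupp⟩ := f.exists_walk_lift hf p rfl
    obtain rfl := f.injective hv'
    rw [← hsupp, List.mem_map] at hw
    obtain ⟨w', hw', rfl⟩ := hw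
    exact ⟨w', rfl, q, hlen.trans hp, hw'⟩
  · rintro ⟨w', rfl, q, hq, hw'⟩
    exact ⟨q.map f.toHom, (q.length_map _).trans hq, by simpa using hw'⟩

theorem mem_range_of_onGeodesic (hf : ∀ a y, G'.Adj (f a) y → y ∈ Set.range f) {u : V} {y w : W}
    (h : OnGeodesic G' (f u) y w) :
    y ∈ Set.range f := by
  obtain ⟨p, -⟩ := h
  obtain ⟨v, -, hv, -⟩ := f.exists_walk_lift hf p rfl
  exact ⟨v, hv⟩

end SimpleGraph.Embedding

section Sum

open Sum

variable {α β : Type*} {G : SimpleGraph α} {H : SimpleGraph β}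

theorem mem_range_sumInl_of_adj (a : α) (y : α ⊕ β) (h : (G ⊕g H).Adj (inl a) y) :
    y ∈ Set.range (Embedding.sumInl (G := G) (H := H)) := by
  cases y <;> simp_all

theorem mem_range_sumInr_of_adj (b : β) (y : α ⊕ β) (h : (G ⊕g H).Adj (inr b) y) :
    y ∈ Set.range (Embedding.sumInr (G := G) (H := H)) := by
  cases y <;> simp_all

theorem onGeodesic_inl_inl_iff {u v : α} {w : α ⊕ β} :
    OnGeodesic (G ⊕g H) (inl u) (inl v) w ↔ ∃ w', inl w' = w ∧ OnGeodesic G u v w' :=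
  Embedding.sumInl.onGeodesic_map_iff mem_range_sumInl_of_adj

theorem onGeodesic_inr_inr_iff {u v : β} {w : α ⊕ β} :
    OnGeodesic (G ⊕g H) (inr u) (inr v) w ↔ ∃ w', inr w' = w ∧ OnGeodesic H u v w' :=
  Embedding.sumInr.onGeodesic_map_iff mem_range_sumInr_of_adj

theorem geoConvex_sum_iff {K : Set (α ⊕ β)} :
    GeoConvex (G ⊕g H) K ↔ GeoConvex G (inl ⁻¹' K) ∧ GeoConvex H (inr ⁻¹' K) := by
  refine ⟨fun hK ↦ ⟨fun u hu v hv w hw ↦ hK hu hv (onGeodesic_inl_inl_iff.mpr ⟨w, rfl, hw⟩),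
    fun u hu v hv w hw ↦ hK hu hv (onGeodesic_inr_inr_iff.mpr ⟨w, rfl, hw⟩)⟩, ?_⟩
  rintro ⟨hl, hr⟩ (a | a) ha (b | b) hb w hw
  · obtain ⟨w', rfl, hw'⟩ := onGeodesic_inl_inl_iff.mp hw
    exact hl ha hb hw'
  · simpa using Embedding.sumInl.mem_range_of_onGeodesic mem_range_sumInl_of_adj hw
  · simpa using Embedding.sumInr.mem_range_of_onGeodesic mem_range_sumInr_of_adj hw
  · obtain ⟨w', rfl, hw'⟩ := onGeodesic_inr_inr_iff.mp hw
    exact hr ha hb hw'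

theorem geoHull_sum (S : Set (α ⊕ β)) :
    geoHull (G ⊕g H) S = Set.sumEquiv.symm (geoHull G (inl ⁻¹' S), geoHull H (inr ⁻¹' S)) := by
  apply subset_antisymm
  · refine geoHull_subset (Set.sumEquiv.le_symm_apply.mpr ⟨subset_geoHull, subset_geoHull⟩)
      (geoConvex_sum_iff.mpr ?_)
    simpa [Set.preimage_image_eq _ inl_injective, Set.preimage_image_eq _ inr_injective] using
      ⟨geoConvex_geoHull, geoConvex_geoHull⟩
  · refine Set.sumEquiv.symm_apply_le.mpr ?_
    have hK := geoConvex_sum_iff.mp (geoConvex_geoHull (G := G ⊕g H) (S := S))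
    exact ⟨geoHull_subset (Set.preimage_mono subset_geoHull) hK.1,
      geoHull_subset (Set.preimage_mono subset_geoHull) hK.2⟩

theorem geoGenerates_sum_iff {S : Set (α ⊕ β)} :
    GeoGenerates (G ⊕g H) S ↔ GeoGenerates G (inl ⁻¹' S) ∧ GeoGenerates H (inr ⁻¹' S) := by
  rw [GeoGenerates, geoHull_sum, ← Set.top_eq_univ, ← Set.sumEquiv.symm.map_top,
    Set.sumEquiv.symm.apply_eq_iff_eq, Prod.ext_iff]
  rfl

end Sum

theorem maxNongen_sum_iff_general {α β : Type*}
    (G : SimpleGraph α) (H : SimpleGraph β) (N : Set (α ⊕ β)) :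
    MaxNongen (G ⊕g H) N ↔
      (∃ M : Set α, MaxNongen G M ∧ N = Sum.inl '' M ∪ Set.range Sum.inr) ∨
      (∃ M : Set β, MaxNongen H M ∧ N = Set.range Sum.inl ∪ Sum.inr '' M) := by
  have hmax : MaxNongen (G ⊕g H) N ↔
      Maximal (fun S ↦ ¬(GeoGenerates G S.1 ∧ GeoGenerates H S.2)) (Set.sumEquiv N) := by
    rw [maxNongen_iff_maximal, Set.sumEquiv.maximal_apply_iff]
    simp only [geoGenerates_sum_iff, Set.sumEquiv_apply]
  rw [hmax, Prod.maximal_not_and_iff geoGenerates_univ geoGenerates_univ,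
    exists_eq_image_inl_union_range_inr_iff, exists_eq_range_inl_union_image_inr_iff]
  simp only [maxNongen_iff_maximal, Set.sumEquiv_apply, Set.top_eq_univ]

/-- The maximal nongenerating sets of a disjoint union `G ⊕g H` are exactly
the sets `N ∪ V(H)` with `N ∈ 𝒩(G)` and the sets `V(G) ∪ N` with `N ∈ 𝒩(H)`. -/
theorem maxNongen_sum_iff {α β : Type*} [Fintype α] [Fintype β]
    (G : SimpleGraph α) (H : SimpleGraph β) (N : Set (α ⊕ β)) :
    MaxNongen (G ⊕g H) N ↔
      (∃ M : Set α, MaxNongen G M ∧ N = Sum.inl '' M ∪ Set.range Sum.inr) ∨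
      (∃ M : Set β, MaxNongen H M ∧ N = Set.range Sum.inl ∪ Sum.inr '' M) :=
  maxNongen_sum_iff_general G H N
end

section
/- Let G = Kₘ + K̄ₙ be the complete split graph (the join of the complete graph on m ≥ 1 vertices with the edgeless graph on n ≥ 2 vertices). Then nim(DNG(G)) = 1 − ((m+n) mod 2) and nim(GEN(G)) = (m+n) mod 2. -/
open SimpleGraph

variable {V : Type*}

/-- The minimum excludant of a set of natural numbers. -/
noncomputable def natMex (A : Set ℕ) : ℕ := sInf {n : ℕ | n ∉ A}

variable [Fintype V] [DecidableEq V]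

/-- Nim-value of a position `P` of the avoidance game `DNG(G)`, computed with fuel:
the options of a position `P` are the sets `insert v P` with `v ∉ P` that are
nongenerating, and the value is the minimum excludant of the values of the options.
The fuel (first argument) tracks the number of unselected vertices, so it never
runs out along actual plays. -/
noncomputable def dngAux (G : SimpleGraph V) : ℕ → Finset V → ℕ
  | 0, _ => 0
  | k + 1, P => natMex {m : ℕ | ∃ v : V, v ∉ P ∧
      ¬ GeoGenerates G (↑(insert v P) : Set V) ∧ m = dngAux G k (insert v P)}

/-- The nim-number of the avoidance game `DNG(G)`: the nim-value of the starting
position `∅`. -/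
noncomputable def dngNim (G : SimpleGraph V) : ℕ := dngAux G (Fintype.card V) ∅

open scoped Classical in
/-- Nim-value of a position `P` of the achievement game `GEN(G)`, computed with fuel:
generating positions are terminal (value `0 = mex ∅`), and the options of a
nongenerating position `P` are all sets `insert v P` with `v ∉ P`. -/
noncomputable def genAux (G : SimpleGraph V) : ℕ → Finset V → ℕ
  | 0, _ => 0
  | k + 1, P =>
      if GeoGenerates G (↑P : Set V) then 0
      else natMex {m : ℕ | ∃ v : V, v ∉ P ∧ m = genAux G k (insert v P)}

/-- The nim-number of the achievement game `GEN(G)`: the nim-value of the starting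
position `∅`. -/
noncomputable def genNim (G : SimpleGraph V) : ℕ := genAux G (Fintype.card V) ∅

/-- The complete split graph `K_m + K̄_n`: vertices are `Fin m ⊕ Fin n`, and two distinct
vertices are adjacent unless both lie in the right (independent) part. -/
def completeSplitGraph (m n : ℕ) : SimpleGraph (Fin m ⊕ Fin n) :=
  SimpleGraph.fromRel (fun x y => x.isLeft ∨ y.isLeft)

namespace NimCSG

variable {m n : ℕ}

lemma csg_adj {u v : Fin m ⊕ Fin n} :
    (completeSplitGraph m n).Adj u v ↔ u ≠ v ∧ (u.isLeft ∨ v.isLeft) := by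
  simp only [completeSplitGraph, fromRel_adj]
  tauto

lemma csg_dist_le_two (hm : 1 ≤ m) (u v : Fin m ⊕ Fin n) :
    (completeSplitGraph m n).dist u v ≤ 2 := by
  by_cases huv : u = v
  · subst huv
    rw [SimpleGraph.dist_self]
    omega
  by_cases hadj : (completeSplitGraph m n).Adj u v
  · calc (completeSplitGraph m n).dist u v ≤ (Walk.cons hadj Walk.nil).length :=
        SimpleGraph.dist_le _
      _ ≤ 2 := by simp
  have hcl : (Sum.inl ⟨0, hm⟩ : Fin m ⊕ Fin n).isLeft := by simp
  have huc : u ≠ Sum.inl ⟨0, hm⟩ := by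
    rintro rfl
    exact hadj (csg_adj.mpr ⟨huv, Or.inl hcl⟩)
  have hvc : v ≠ Sum.inl ⟨0, hm⟩ := by
    rintro rfl
    exact hadj (csg_adj.mpr ⟨huv, Or.inr hcl⟩)
  have h1 : (completeSplitGraph m n).Adj u (Sum.inl ⟨0, hm⟩) := csg_adj.mpr ⟨huc, Or.inr hcl⟩
  have h2 : (completeSplitGraph m n).Adj (Sum.inl ⟨0, hm⟩) v :=
    csg_adj.mpr ⟨fun h => hvc h.symm, Or.inl hcl⟩
  calc (completeSplitGraph m n).dist u v ≤ (Walk.cons h1 (Walk.cons h2 Walk.nil)).length :=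
      SimpleGraph.dist_le _
    _ ≤ 2 := by simp

lemma csg_dist_inr (hm : 1 ≤ m) {y₀ y₁ : Fin n} (h : y₀ ≠ y₁) :
    (completeSplitGraph m n).dist (Sum.inr y₀) (Sum.inr y₁) = 2 := by
  have hne : (Sum.inr y₀ : Fin m ⊕ Fin n) ≠ Sum.inr y₁ := by simp [h]
  have h1 : (completeSplitGraph m n).Adj (Sum.inr y₀) (Sum.inl ⟨0, hm⟩) :=
    csg_adj.mpr ⟨by simp, Or.inr (by simp)⟩
  have h2 : (completeSplitGraph m n).Adj (Sum.inl ⟨0, hm⟩) (Sum.inr y₁) :=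
    csg_adj.mpr ⟨by simp, Or.inl (by simp)⟩
  have hreach : (completeSplitGraph m n).Reachable (Sum.inr y₀) (Sum.inr y₁) :=
    ⟨Walk.cons h1 (Walk.cons h2 Walk.nil)⟩
  have h0 : (completeSplitGraph m n).dist (Sum.inr y₀) (Sum.inr y₁) ≠ 0 := by
    rw [Ne, SimpleGraph.dist_eq_zero_iff_eq_or_not_reachable]
    push_neg
    exact ⟨hne, hreach⟩
  have h1' : (completeSplitGraph m n).dist (Sum.inr y₀) (Sum.inr y₁) ≠ 1 := by
    rw [Ne, SimpleGraph.dist_eq_one_iff_adj]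
    intro hadj
    rcases (csg_adj.mp hadj).2 with hl | hl <;> simp at hl
  have := csg_dist_le_two hm (Sum.inr y₀ : Fin m ⊕ Fin n) (Sum.inr y₁)
  omega

lemma csg_onGeodesic (hm : 1 ≤ m) {y₀ y₁ : Fin n} (h : y₀ ≠ y₁) (x : Fin m) :
    OnGeodesic (completeSplitGraph m n) (Sum.inr y₀) (Sum.inr y₁) (Sum.inl x) := by
  have h1 : (completeSplitGraph m n).Adj (Sum.inr y₀) (Sum.inl x) :=
    csg_adj.mpr ⟨by simp, Or.inr (by simp)⟩
  have h2 : (completeSplitGraph m n).Adj (Sum.inl x) (Sum.inr y₁) :=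
    csg_adj.mpr ⟨by simp, Or.inl (by simp)⟩
  refine ⟨Walk.cons h1 (Walk.cons h2 Walk.nil), ?_, ?_, ?_⟩
  · rw [Walk.isPath_def]
    simp [h]
  · rw [csg_dist_inr hm h]
    simp
  · simp


lemma csg_convex_ne (hm : 1 ≤ m) (y : Fin n) :
    GeoConvex (completeSplitGraph m n) {v : Fin m ⊕ Fin n | v ≠ Sum.inr y} := by
  intro u hu v hv w hw
  rcases hw with ⟨p, hp, hlen, hsupp⟩
  simp only [Set.mem_setOf_eq] at hu hv ⊢
  intro hwy
  subst hwy
  -- decompose the walk at w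
  have hql := congrArg Walk.length (p.take_spec hsupp)
  rw [Walk.length_append] at hql
  have hq1 : (p.takeUntil _ hsupp).length ≠ 0 := fun h0 => hu (Walk.eq_of_length_eq_zero h0)
  have hr1 : (p.dropUntil _ hsupp).length ≠ 0 := fun h0 => hv (Walk.eq_of_length_eq_zero h0).symm
  have hd2 : (completeSplitGraph m n).dist u v ≤ 2 := csg_dist_le_two hm u v
  have hq : (p.takeUntil _ hsupp).length = 1 := by omega
  have hr : (p.dropUntil _ hsupp).length = 1 := by omega
  have hadj1 := Walk.adj_of_length_eq_one hq
  have hadj2 := Walk.adj_of_length_eq_one hr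
  have hul : u.isLeft := by
    rcases (csg_adj.mp hadj1).2 with hl | hl
    · exact hl
    · simp at hl
  have hvl : v.isLeft := by
    rcases (csg_adj.mp hadj2).2 with hl | hl
    · simp at hl
    · exact hl
  have huv : u ≠ v := by
    rintro rfl
    rw [SimpleGraph.dist_self] at hlen
    omega
  have : (completeSplitGraph m n).dist u v = 1 :=
    SimpleGraph.dist_eq_one_iff_adj.mpr (csg_adj.mpr ⟨huv, Or.inl hul⟩)
  omega

lemma csg_gen_iff (hm : 1 ≤ m) (hn : 2 ≤ n) (S : Set (Fin m ⊕ Fin n)) :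
    GeoGenerates (completeSplitGraph m n) S ↔ ∀ y : Fin n, Sum.inr y ∈ S := by
  constructor
  · intro hgen y
    by_contra hy
    have hK : S ⊆ {v : Fin m ⊕ Fin n | v ≠ Sum.inr y} := by
      intro s hs
      simp only [Set.mem_setOf_eq]
      rintro rfl
      exact hy hs
    have hmem : {v : Fin m ⊕ Fin n | v ≠ Sum.inr y} ∈
        {K : Set (Fin m ⊕ Fin n) | S ⊆ K ∧ GeoConvex (completeSplitGraph m n) K} :=
      ⟨hK, csg_convex_ne hm y⟩
    have : Sum.inr y ∈ geoHull (completeSplitGraph m n) S := by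
      rw [hgen]; trivial
    exact (Set.mem_sInter.mp this _ hmem) rfl
  · intro hall
    rw [GeoGenerates, Set.eq_univ_iff_forall]
    intro w
    rw [geoHull, Set.mem_sInter]
    rintro K ⟨hSK, hKc⟩
    cases w with
    | inr y => exact hSK (hall y)
    | inl x =>
      have h01 : (⟨0, by omega⟩ : Fin n) ≠ ⟨1, by omega⟩ := by simp
      exact hKc (hSK (hall _)) (hSK (hall _)) (csg_onGeodesic hm h01 x)


lemma natMex_eq {S : Set ℕ} {c : ℕ} (h1 : c ∉ S) (h2 : ∀ k < c, k ∈ S) : natMex S = c := by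
  refine le_antisymm (Nat.sInf_le h1) ?_
  by_contra hlt
  push_neg at hlt
  exact Nat.sInf_mem (⟨c, h1⟩ : Set.Nonempty {n | n ∉ S}) (h2 _ hlt)

-- counting lemmas
lemma toLeft_card_le (P : Finset (Fin m ⊕ Fin n)) : P.toLeft.card ≤ m :=
  le_of_le_of_eq (Finset.card_le_univ _) (Fintype.card_fin m)

lemma toRight_card_le (P : Finset (Fin m ⊕ Fin n)) : P.toRight.card ≤ n :=
  le_of_le_of_eq (Finset.card_le_univ _) (Fintype.card_fin n)

lemma toLeft_insert_inl (x : Fin m) (P : Finset (Fin m ⊕ Fin n)) :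
    (insert (Sum.inl x) P).toLeft = insert x P.toLeft := by ext a; simp
lemma toRight_insert_inl (x : Fin m) (P : Finset (Fin m ⊕ Fin n)) :
    (insert (Sum.inl x) P).toRight = P.toRight := by ext a; simp
lemma toLeft_insert_inr (y : Fin n) (P : Finset (Fin m ⊕ Fin n)) :
    (insert (Sum.inr y) P).toLeft = P.toLeft := by ext a; simp
lemma toRight_insert_inr (y : Fin n) (P : Finset (Fin m ⊕ Fin n)) :
    (insert (Sum.inr y) P).toRight = insert y P.toRight := by ext a; simp

lemma csg_gen_coe_iff (hm : 1 ≤ m) (hn : 2 ≤ n) (P : Finset (Fin m ⊕ Fin n)) :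
    GeoGenerates (completeSplitGraph m n) (↑P) ↔ P.toRight = Finset.univ := by
  rw [csg_gen_iff hm hn, Finset.eq_univ_iff_forall]
  simp

lemma csg_nongen_iff (hm : 1 ≤ m) (hn : 2 ≤ n) (P : Finset (Fin m ⊕ Fin n)) :
    ¬ GeoGenerates (completeSplitGraph m n) (↑P) ↔ P.toRight.card < n := by
  rw [csg_gen_coe_iff hm hn, ← not_iff_not]
  push_neg
  rw [iff_comm, ← Finset.card_eq_iff_eq_univ]
  have := toRight_card_le P
  rw [Fintype.card_fin]
  omega

-- DNG value lemma
lemma dng_val (hm : 1 ≤ m) (hn : 2 ≤ n) :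
    ∀ k (P : Finset (Fin m ⊕ Fin n)), ¬ GeoGenerates (completeSplitGraph m n) (↑P) →
      P.card + (k + 1) = m + n → dngAux (completeSplitGraph m n) (k + 1) P = k % 2 := by
  intro k
  induction k with
  | zero =>
    intro P hng hcard
    have : {x : ℕ | ∃ v, v ∉ P ∧
        ¬ GeoGenerates (completeSplitGraph m n) (↑(insert v P) : Set _) ∧
        x = dngAux (completeSplitGraph m n) 0 (insert v P)} = ∅ := by
      rw [Set.eq_empty_iff_forall_notMem]
      rintro x ⟨v, hv, hng', -⟩
      apply hng'
      have hcard' : (insert v P).card = Fintype.card (Fin m ⊕ Fin n) := by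
        rw [Finset.card_insert_of_notMem hv]
        simp
        omega
      rw [(Finset.card_eq_iff_eq_univ _).mp hcard']
      rw [csg_gen_coe_iff hm hn]
      ext a; simp
    rw [dngAux, this]
    exact natMex_eq (by simp) (by omega)
  | succ k ih =>
    intro P hng hcard
    have hO : {x : ℕ | ∃ v, v ∉ P ∧
        ¬ GeoGenerates (completeSplitGraph m n) (↑(insert v P) : Set _) ∧
        x = dngAux (completeSplitGraph m n) (k + 1) (insert v P)} = {k % 2} := by
      ext x
      simp only [Set.mem_setOf_eq, Set.mem_singleton_iff]
      constructor
      · rintro ⟨v, hv, hng', rfl⟩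
        exact ih (insert v P) hng' (by rw [Finset.card_insert_of_notMem hv]; omega)
      · rintro rfl
        -- find a vertex to add
        rw [csg_nongen_iff hm hn] at hng
        have hy : ∃ y : Fin n, Sum.inr y ∉ P := by
          by_contra hno
          push_neg at hno
          have : P.toRight = Finset.univ := Finset.eq_univ_iff_forall.mpr (by simpa using hno)
          rw [this, Finset.card_univ, Fintype.card_fin] at hng
          omega
        obtain ⟨y, hyP⟩ := hy
        have hcompl : 1 < Pᶜ.card := by
          rw [Finset.card_compl]
          simp only [Fintype.card_sum, Fintype.card_fin]
          omega
        obtain ⟨v, hvmem, hvy⟩ := Finset.exists_mem_ne hcompl (Sum.inr y)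
        rw [Finset.mem_compl] at hvmem
        have hng' : ¬ GeoGenerates (completeSplitGraph m n) (↑(insert v P) : Set _) := by
          rw [csg_gen_iff hm hn]
          push_neg
          refine ⟨y, ?_⟩
          simp only [Finset.coe_insert, Set.mem_insert_iff, Finset.mem_coe]
          push_neg
          exact ⟨fun h => hvy h.symm, hyP⟩
        exact ⟨v, hvmem, hng',
          (ih (insert v P) hng' (by rw [Finset.card_insert_of_notMem hvmem]; omega)).symm⟩
    rw [dngAux, hO]
    rcases Nat.mod_two_eq_zero_or_one k with hk | hk <;> rw [hk]
    · rw [natMex_eq (c := 1) (by simp) (by intro j hj; interval_cases j; simp)]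
      omega
    · rw [natMex_eq (c := 0) (by simp) (by omega)]
      omega


/-- Closed form for the nim-value of a `GEN` position with `a` clique vertices
and `b` independent vertices selected. -/
def genF (m n a b : ℕ) : ℕ :=
  if n ≤ b then 0
  else if b + 1 = n then (if (m + a) % 2 = 0 then 1 else 2)
  else (m + n + a + b) % 2

lemma gen_val (hm : 1 ≤ m) (hn : 2 ≤ n) :
    ∀ k (P : Finset (Fin m ⊕ Fin n)), P.card + k = m + n →
      genAux (completeSplitGraph m n) k P = genF m n P.toLeft.card P.toRight.card := by
  intro k
  induction k with
  | zero =>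
    intro P hcard
    have hP : P = Finset.univ := by
      rw [← Finset.card_eq_iff_eq_univ]
      simp
      omega
    subst hP
    have : (Finset.univ : Finset (Fin m ⊕ Fin n)).toRight = Finset.univ := by ext a; simp
    rw [genAux, this, Finset.card_univ, Fintype.card_fin, genF, if_pos le_rfl]
  | succ k ih =>
    intro P hcard
    have hab : P.toLeft.card + P.toRight.card = P.card := Finset.card_toLeft_add_card_toRight
    set a := P.toLeft.card with ha
    set b := P.toRight.card with hb
    have ham : a ≤ m := toLeft_card_le P
    have hbn : b ≤ n := toRight_card_le P
    by_cases hg : GeoGenerates (completeSplitGraph m n) (↑P : Set _)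
    · -- generating: value 0, and b = n
      have hbn' : b = n := by
        rw [csg_gen_coe_iff hm hn] at hg
        rw [hb, hg, Finset.card_univ, Fintype.card_fin]
      rw [genAux, if_pos hg, genF, if_pos (le_of_eq hbn'.symm)]
    · have hblt : b < n := (csg_nongen_iff hm hn P).mp hg
      have hmem : ∀ x : ℕ,
          (∃ v, v ∉ P ∧ x = genAux (completeSplitGraph m n) k (insert v P)) ↔
            ((a < m ∧ x = genF m n (a + 1) b) ∨ x = genF m n a (b + 1)) := by
        intro x
        constructor
        · rintro ⟨v, hv, rfl⟩
          have hcard' : (insert v P).card + k = m + n := by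
            rw [Finset.card_insert_of_notMem hv]; omega
          cases v with
          | inl xx =>
            left
            have hxx : xx ∉ P.toLeft := by simpa using hv
            constructor
            · have : P.toLeft ≠ Finset.univ := fun h => hxx (h ▸ Finset.mem_univ xx)
              have := (Finset.card_lt_iff_ne_univ _).mpr this
              rwa [Fintype.card_fin] at this
            · rw [ih _ hcard', toLeft_insert_inl, toRight_insert_inl,
                Finset.card_insert_of_notMem hxx]
          | inr yy =>
            right
            have hyy : yy ∉ P.toRight := by simpa using hv
            rw [ih _ hcard', toLeft_insert_inr, toRight_insert_inr,
              Finset.card_insert_of_notMem hyy]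
        · rintro (⟨haltm, rfl⟩ | rfl)
          · have : P.toLeft ≠ Finset.univ := by
              intro h
              rw [h, Finset.card_univ, Fintype.card_fin] at ha
              omega
            obtain ⟨xx, hxx⟩ : ∃ xx, xx ∉ P.toLeft := by
              by_contra hno
              push_neg at hno
              exact this (Finset.eq_univ_iff_forall.mpr hno)
            have hv : (Sum.inl xx : Fin m ⊕ Fin n) ∉ P := by simpa using hxx
            refine ⟨Sum.inl xx, hv, ?_⟩
            rw [ih _ (by rw [Finset.card_insert_of_notMem hv]; omega),
              toLeft_insert_inl, toRight_insert_inl, Finset.card_insert_of_notMem hxx]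
          · have : P.toRight ≠ Finset.univ := by
              intro h
              rw [h, Finset.card_univ, Fintype.card_fin] at hb
              omega
            obtain ⟨yy, hyy⟩ : ∃ yy, yy ∉ P.toRight := by
              by_contra hno
              push_neg at hno
              exact this (Finset.eq_univ_iff_forall.mpr hno)
            have hv : (Sum.inr yy : Fin m ⊕ Fin n) ∉ P := by simpa using hyy
            refine ⟨Sum.inr yy, hv, ?_⟩
            rw [ih _ (by rw [Finset.card_insert_of_notMem hv]; omega),
              toLeft_insert_inr, toRight_insert_inr, Finset.card_insert_of_notMem hyy]
      rw [genAux, if_neg hg]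
      -- now compute the mex by cases
      have hcase : b + 2 < n ∨ b + 2 = n ∨ b + 1 = n := by omega
      rcases hcase with hc | hc | hc
      · -- deep case: all values are parities
        have hF0 : genF m n a b = (m + n + a + b) % 2 := by
          rw [genF, if_neg (by omega), if_neg (by omega)]
        have hFL : genF m n (a + 1) b = (m + n + a + b + 1) % 2 := by
          rw [genF, if_neg (by omega), if_neg (by omega)]
          omega
        have hFR : genF m n a (b + 1) = (m + n + a + b + 1) % 2 := by
          rw [genF, if_neg (by omega), if_neg (by omega)]
          omega
        rw [hF0]
        rcases Nat.mod_two_eq_zero_or_one (m + n + a + b) with hp | hp <;> rw [hp]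
        · refine natMex_eq ?_ (by omega)
          rw [Set.mem_setOf_eq, hmem]
          omega
        · refine natMex_eq ?_ ?_
          · rw [Set.mem_setOf_eq, hmem]
            omega
          · intro j hj
            interval_cases j
            rw [Set.mem_setOf_eq, hmem]
            omega
      · -- b + 2 = n
        have hF0 : genF m n a b = (m + a) % 2 := by
          rw [genF, if_neg (by omega), if_neg (by omega)]
          omega
        have hFL : genF m n (a + 1) b = (m + a + 1) % 2 := by
          rw [genF, if_neg (by omega), if_neg (by omega)]
          omega
        have hFR : genF m n a (b + 1) = if (m + a) % 2 = 0 then 1 else 2 := by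
          rw [genF, if_neg (by omega), if_pos (by omega)]
        rw [hF0]
        rcases Nat.mod_two_eq_zero_or_one (m + a) with hp | hp <;> rw [hp]
        · rw [hp, if_pos rfl] at hFR
          refine natMex_eq ?_ (by omega)
          rw [Set.mem_setOf_eq, hmem]
          omega
        · rw [hFR] at hmem
          rw [if_neg (by omega)] at hmem
          have haltm : a < m := by omega
          refine natMex_eq ?_ ?_
          · rw [Set.mem_setOf_eq, hmem]
            omega
          · intro j hj
            interval_cases j
            rw [Set.mem_setOf_eq, hmem]
            omega
      · -- b + 1 = n
        have hF0 : genF m n a b = if (m + a) % 2 = 0 then 1 else 2 := by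
          rw [genF, if_neg (by omega), if_pos hc]
        have hFL : genF m n (a + 1) b = if (m + a + 1) % 2 = 0 then 1 else 2 := by
          rw [genF, if_neg (by omega), if_pos hc, ← Nat.add_assoc]
        have hFR : genF m n a (b + 1) = 0 := by
          rw [genF, if_pos (by omega)]
        rw [hFR, hFL] at hmem
        rw [hF0]
        rcases Nat.mod_two_eq_zero_or_one (m + a) with hp | hp
        · rw [if_pos hp]
          rw [show (m + a + 1) % 2 = 1 by omega, if_neg (by omega)] at hmem
          refine natMex_eq ?_ ?_
          · rw [Set.mem_setOf_eq, hmem]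
            omega
          · intro j hj
            interval_cases j
            rw [Set.mem_setOf_eq, hmem]
            omega
        · rw [if_neg (by omega)]
          have haltm : a < m := by omega
          rw [show (m + a + 1) % 2 = 0 by omega, if_pos rfl] at hmem
          refine natMex_eq ?_ ?_
          · rw [Set.mem_setOf_eq, hmem]
            omega
          · intro j hj
            interval_cases j <;> rw [Set.mem_setOf_eq, hmem] <;> omega

end NimCSG

/-- For the complete split graph with `m ≥ 1` and `n ≥ 2`,
`nim(DNG) = 1 - ((m+n) mod 2)` and `nim(GEN) = (m+n) mod 2`. -/
theorem nim_completeSplitGraph (m n : ℕ) (hm : 1 ≤ m) (hn : 2 ≤ n) :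
    dngNim (completeSplitGraph m n) = 1 - (m + n) % 2 ∧
      genNim (completeSplitGraph m n) = (m + n) % 2 := by
  have hcardV : Fintype.card (Fin m ⊕ Fin n) = m + n := by simp
  have hL : (∅ : Finset (Fin m ⊕ Fin n)).toLeft = ∅ := by ext a; simp
  have hR : (∅ : Finset (Fin m ⊕ Fin n)).toRight = ∅ := by ext a; simp
  constructor
  · obtain ⟨j, hj⟩ : ∃ j, m + n = j + 1 := ⟨m + n - 1, by omega⟩
    rw [dngNim, hcardV, hj]
    have hng : ¬ GeoGenerates (completeSplitGraph m n) (↑(∅ : Finset (Fin m ⊕ Fin n))) := by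
      rw [NimCSG.csg_nongen_iff hm hn, hR]
      simp
      omega
    rw [NimCSG.dng_val hm hn j ∅ hng (by simp; omega)]
    omega
  · have h0 : (∅ : Finset (Fin m ⊕ Fin n)).card + (m + n) = m + n := by simp
    rw [genNim, hcardV, NimCSG.gen_val hm hn (m + n) ∅ h0, hL, hR]
    simp only [Finset.card_empty]
    rw [NimCSG.genF]
    rw [if_neg (by omega), if_neg (by omega)]
    omega
end

section
/- For the cycle graph Cₙ with n ≥ 3, the nim-number of the achievement game is nim(GEN(Cₙ)) = n mod 2. -/
open SimpleGraph

variable {V : Type*}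

variable [Fintype V] [DecidableEq V]

open scoped Fin.NatCast Fin.CommRing

section CycPrelim
variable {n : ℕ}

lemma mod_two_cases {x : ℕ} (h : x < 2 * n) :
    x % n = if x < n then x else x - n := by
  split_ifs with h'
  · exact Nat.mod_eq_of_lt h'
  · rw [Nat.mod_eq_sub_mod (le_of_not_gt h'), Nat.mod_eq_of_lt (by omega)]

variable [NeZero n]

lemma sub_val_if (i j : Fin n) :
    (i - j).val = if j.val ≤ i.val then i.val - j.val else i.val + n - j.val := by
  have hi := i.isLt; have hj := j.isLt
  show (n - j.val + i.val) % n = _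
  rw [mod_two_cases (by omega)]
  split_ifs <;> omega

lemma sub_val_add_sub_val (i j : Fin n) :
    (i - j).val + (j - i).val = 0 ∨ (i - j).val + (j - i).val = n := by
  have hi := i.isLt; have hj := j.isLt
  rw [sub_val_if, sub_val_if]
  split_ifs <;> omega

lemma cyc_walk_lb (hn : 3 ≤ n) {i j : Fin n} (p : (cycleGraph n).Walk i j) :
    min ((j - i).val) ((i - j).val) ≤ p.length := by
  induction p with
  | nil => simp
  | @cons i i' j h q ih =>
    rw [Walk.length_cons]
    have hadj := (cycleGraph_adj').mp h
    set A := (j - i').val with hA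
    set B := (i' - j).val with hB
    have hABsum := sub_val_add_sub_val j i'
    have hAn : A < n := (j - i').isLt
    have hBn : B < n := (i' - j).isLt
    have e1 : j - i = (j - i') + (i' - i) := by ring
    have e2 : i - j = (i - i') + (i' - j) := by ring
    have v1 : (j - i).val = (A + (i' - i).val) % n := by rw [e1, Fin.val_add]
    have v2 : (i - j).val = ((i - i').val + B) % n := by rw [e2, Fin.val_add]
    have hsum2 := sub_val_add_sub_val i i'
    rcases hadj with h1 | h1
    · have h2 : (i' - i).val = n - 1 := by omega
      rw [v1, v2, h1, h2, mod_two_cases (by omega), mod_two_cases (by omega)]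
      have : min A B ≤ q.length := ih
      split_ifs <;> omega
    · have h2 : (i - i').val = n - 1 := by omega
      rw [v1, v2, h1, h2, mod_two_cases (by omega), mod_two_cases (by omega)]
      have : min A B ≤ q.length := ih
      split_ifs <;> omega

lemma cyc_adj_succ (hn : 3 ≤ n) (i : Fin n) : (cycleGraph n).Adj i (i + 1) := by
  rw [cycleGraph_adj']
  right
  have h : (i + 1) - i = 1 := by ring
  rw [h]
  have h1 : ((1 : Fin n)).val = 1 % n := Fin.val_one' n
  rw [h1]
  exact Nat.mod_eq_of_lt (by omega)

def fwdWalk (hn : 3 ≤ n) : (i : Fin n) → (k : ℕ) → (cycleGraph n).Walk i (i + (k : Fin n))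
  | i, 0 => Walk.nil.copy rfl (by simp)
  | i, k+1 => (Walk.cons (cyc_adj_succ hn i) (fwdWalk hn (i+1) k)).copy rfl (by push_cast; ring)

lemma fwdWalk_length (hn : 3 ≤ n) (i : Fin n) (k : ℕ) : (fwdWalk hn i k).length = k := by
  induction k generalizing i with
  | zero => simp [fwdWalk]
  | succ k ih => simp [fwdWalk, ih]

lemma mem_fwdWalk_support (hn : 3 ≤ n) (i : Fin n) (k : ℕ) (w : Fin n) :
    w ∈ (fwdWalk hn i k).support ↔ ∃ c ≤ k, w = i + (c : Fin n) := by
  induction k generalizing i with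
  | zero =>
    simp only [fwdWalk, Walk.support_copy, Walk.support_nil, List.mem_singleton]
    constructor
    · rintro rfl; exact ⟨0, le_refl 0, by simp⟩
    · rintro ⟨c, hc, rfl⟩; interval_cases c; simp
  | succ k ih =>
    simp only [fwdWalk, Walk.support_copy, Walk.support_cons, List.mem_cons, ih]
    constructor
    · rintro (rfl | ⟨c, hc, rfl⟩)
      · exact ⟨0, by omega, by simp⟩
      · exact ⟨c + 1, by omega, by push_cast; ring⟩
    · rintro ⟨c, hc, rfl⟩
      match c with
      | 0 => left; simp
      | c + 1 => right; exact ⟨c, by omega, by push_cast; ring⟩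

lemma fwdWalk_isPath (hn : 3 ≤ n) (i : Fin n) (k : ℕ) (hk : k < n) :
    (fwdWalk hn i k).IsPath := by
  induction k generalizing i with
  | zero =>
    simp only [fwdWalk]
    rw [Walk.isPath_copy]
    exact Walk.IsPath.nil
  | succ k ih =>
    simp only [fwdWalk]
    rw [Walk.isPath_copy]
    apply (ih (i + 1) (by omega)).cons
    rw [mem_fwdWalk_support]
    rintro ⟨c, hc, hci⟩
    have h2 : i = i + ((c + 1 : ℕ) : Fin n) := by
      nth_rewrite 1 [hci]; push_cast; ring
    have h3 : ((c + 1 : ℕ) : Fin n) = 0 := (left_eq_add).mp h2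
    have h4 := congrArg Fin.val h3
    rw [Fin.val_natCast, Nat.mod_eq_of_lt (by omega)] at h4
    simp at h4

lemma cyc_dist_eq (hn : 3 ≤ n) (i j : Fin n) :
    (cycleGraph n).dist i j = min ((j - i).val) ((i - j).val) := by
  have mkwalk : ∀ a b : Fin n, ∃ p : (cycleGraph n).Walk a b, p.length = (b - a).val := by
    intro a b
    refine ⟨(fwdWalk hn a ((b - a).val)).copy rfl ?_, by simp [fwdWalk_length]⟩
    rw [Fin.cast_val_eq_self]; ring
  obtain ⟨p1, hp1⟩ := mkwalk i j
  obtain ⟨p2, hp2⟩ := mkwalk j i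
  apply le_antisymm
  · apply le_min
    · exact hp1 ▸ SimpleGraph.dist_le p1
    · rw [SimpleGraph.dist_comm]
      exact hp2 ▸ SimpleGraph.dist_le p2
  · obtain ⟨q, hq⟩ := (Reachable.exists_walk_length_eq_dist ⟨p1⟩ : _)
    calc min ((j - i).val) ((i - j).val) ≤ q.length := cyc_walk_lb hn q
    _ = _ := hq

lemma onGeodesic_dist_split [DecidableEq V] {G : SimpleGraph V} {u v w : V}
    (h : OnGeodesic G u v w) :
    G.dist u w + G.dist w v ≤ G.dist u v := by
  obtain ⟨p, hp, hl, hw⟩ := h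
  have h1 : G.dist u w ≤ (p.takeUntil w hw).length := SimpleGraph.dist_le _
  have h2 : G.dist w v ≤ (p.dropUntil w hw).length := SimpleGraph.dist_le _
  have h3 : (p.takeUntil w hw).length + (p.dropUntil w hw).length = p.length := by
    rw [← Walk.length_append, Walk.take_spec]
  omega

/-- Arcs of circumference `≤ n/2` (strictly if we want) are convex. -/
lemma arc_convex (hn : 3 ≤ n) (u : Fin n) (d : ℕ) (hd : 2 * d < n) :
    GeoConvex (cycleGraph n) {w : Fin n | (w - u).val ≤ d} := by
  intro x hx y hy w hw
  have key := onGeodesic_dist_split hw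
  rw [cyc_dist_eq hn, cyc_dist_eq hn, cyc_dist_eq hn] at key
  simp only [Set.mem_setOf_eq] at hx hy ⊢
  have hcn : (w - u).val < n := (w - u).isLt
  have han : (x - u).val < n := (x - u).isLt
  have hbn : (y - u).val < n := (y - u).isLt
  have e1 : w - x = (w - u) - (x - u) := by ring
  have e2 : x - w = (x - u) - (w - u) := by ring
  have e3 : y - w = (y - u) - (w - u) := by ring
  have e4 : w - y = (w - u) - (y - u) := by ring
  have e5 : y - x = (y - u) - (x - u) := by ring
  have e6 : x - y = (x - u) - (y - u) := by ring
  have v1 : (w - x).val = if (x - u).val ≤ (w - u).val then (w - u).val - (x - u).val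
      else (w - u).val + n - (x - u).val := by rw [e1]; exact sub_val_if _ _
  have v2 : (x - w).val = if (w - u).val ≤ (x - u).val then (x - u).val - (w - u).val
      else (x - u).val + n - (w - u).val := by rw [e2]; exact sub_val_if _ _
  have v3 : (y - w).val = if (w - u).val ≤ (y - u).val then (y - u).val - (w - u).val
      else (y - u).val + n - (w - u).val := by rw [e3]; exact sub_val_if _ _
  have v4 : (w - y).val = if (y - u).val ≤ (w - u).val then (w - u).val - (y - u).val
      else (w - u).val + n - (y - u).val := by rw [e4]; exact sub_val_if _ _
  have v5 : (y - x).val = if (x - u).val ≤ (y - u).val then (y - u).val - (x - u).val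
      else (y - u).val + n - (x - u).val := by rw [e5]; exact sub_val_if _ _
  have v6 : (x - y).val = if (y - u).val ≤ (x - u).val then (x - u).val - (y - u).val
      else (x - u).val + n - (y - u).val := by rw [e6]; exact sub_val_if _ _
  rw [v1, v2, v3, v4, v5, v6] at key
  split_ifs at key <;> omega

/-- any point on the short arc between two elements of a convex set is in the set -/
lemma mem_of_convex (hn : 3 ≤ n) {K : Set (Fin n)} (hK : GeoConvex (cycleGraph n) K)
    {p q : Fin n} (hp : p ∈ K) (hq : q ∈ K) (hd : 2 * (q - p).val ≤ n)
    (c : ℕ) (hc : c ≤ (q - p).val) : p + (c : Fin n) ∈ K := by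
  set d := (q - p).val with hdd
  have hdn : d < n := (q - p).isLt
  have hq' : q = p + ((d : ℕ) : Fin n) := by
    rw [hdd, Fin.cast_val_eq_self]; ring
  have hdist : (cycleGraph n).dist p q = d := by
    rw [cyc_dist_eq hn]
    rcases sub_val_add_sub_val p q with h | h <;> omega
  refine hK hp hq ⟨(fwdWalk hn p d).copy rfl hq'.symm, ?_, ?_, ?_⟩
  · rw [Walk.isPath_copy]; exact fwdWalk_isPath hn p d hdn
  · rw [Walk.length_copy, fwdWalk_length, hdist]
  · rw [Walk.support_copy, mem_fwdWalk_support]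
    exact ⟨c, hc, rfl⟩

end CycPrelim

section HullLayer
variable {G : SimpleGraph V}

lemma generates_of (S : Set V)
    (h : ∀ K : Set V, S ⊆ K → GeoConvex G K → ∀ w, w ∈ K) : GeoGenerates G S := by
  rw [GeoGenerates, Set.eq_univ_iff_forall]
  intro w
  rw [geoHull, Set.mem_sInter]
  rintro K ⟨hSK, hK⟩
  exact h K hSK hK w

lemma not_generates_of {S K : Set V} (hK : GeoConvex G K) (hS : S ⊆ K) {w : V}
    (hw : w ∉ K) : ¬ GeoGenerates G S := by
  intro h
  apply hw
  have hsub : geoHull G S ⊆ K := Set.sInter_subset_of_mem ⟨hS, hK⟩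
  rw [GeoGenerates] at h
  rw [h] at hsub
  exact hsub (Set.mem_univ w)

lemma singleton_convex (v : V) : GeoConvex G {v} := by
  rintro u hu x hx w hw
  simp only [Set.mem_singleton_iff] at hu hx ⊢
  subst hu; subst hx
  obtain ⟨p, hp, hl, hmem⟩ := hw
  rw [SimpleGraph.dist_self] at hl
  rw [Walk.nil_iff_eq_nil.mp (Walk.length_eq_zero_iff.mp hl)] at hmem
  simpa using hmem

lemma empty_convex : GeoConvex G (∅ : Set V) := by rintro u hu; cases hu
end HullLayer

section CycGen
variable {n : ℕ} [NeZero n]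

lemma val_sub_self_add (u : Fin n) (c : ℕ) (hc : c < n) : ((u + (c : Fin n)) - u).val = c := by
  have h : (u + (c : Fin n)) - u = (c : Fin n) := by ring
  rw [h, Fin.val_natCast, Nat.mod_eq_of_lt hc]

lemma cyc_empty_nongen (hn : 3 ≤ n) : ¬ GeoGenerates (cycleGraph n) (∅ : Set (Fin n)) :=
  not_generates_of empty_convex (le_refl _) (Set.notMem_empty 0)

lemma cyc_singleton_nongen (hn : 3 ≤ n) (v : Fin n) :
    ¬ GeoGenerates (cycleGraph n) {v} := by
  refine not_generates_of (singleton_convex v) (le_refl _) (w := v + (1 : Fin n)) ?_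
  simp only [Set.mem_singleton_iff]
  intro h
  have h2 : ((1 : ℕ) : Fin n) = 0 := by
    have : v + ((1:ℕ) : Fin n) = v + 0 := by rw [Nat.cast_one, add_zero]; exact h
    exact add_left_cancel this
  have h4 := congrArg Fin.val h2
  rw [Fin.val_natCast, Nat.mod_eq_of_lt (by omega)] at h4
  simp at h4

/-- a pair at "circular distance" strictly less than n/2 in both directions...
any pair is nongenerating when n is odd -/
lemma cyc_pair_nongen (hn : 3 ≤ n) (hodd : n % 2 = 1) (u v : Fin n) :
    ¬ GeoGenerates (cycleGraph n) {u, v} := by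
  have hsum := sub_val_add_sub_val v u
  have h1 : (v - u).val < n := (v - u).isLt
  rcases lt_or_ge (2 * (v - u).val) n with hlt | hge
  · -- arc centered at u of radius d
    set d := (v - u).val with hd
    refine not_generates_of (arc_convex hn u d hlt) ?_ (w := u + (((d+1 : ℕ)) : Fin n)) ?_
    · rintro x (rfl | rfl)
      · simp only [Set.mem_setOf_eq, sub_self, Fin.val_zero]; omega
      · simp only [Set.mem_setOf_eq]; omega
    · simp only [Set.mem_setOf_eq]
      rw [val_sub_self_add u (d+1) (by omega)]
      omega
  · -- use the other direction: d' = (u - v).val, 2 d' < n since n odd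
    have hne : (v - u).val ≠ 0 := by omega
    have hlt' : 2 * (u - v).val < n := by omega
    set d := (u - v).val with hd
    refine not_generates_of (arc_convex hn v d hlt') ?_ (w := v + (((d+1 : ℕ)) : Fin n)) ?_
    · rintro x (rfl | rfl)
      · simp only [Set.mem_setOf_eq]; omega
      · simp only [Set.mem_setOf_eq, sub_self, Fin.val_zero]; omega
    · simp only [Set.mem_setOf_eq]
      rw [val_sub_self_add v (d+1) (by omega)]
      omega
end CycGen

section CycGen2
variable {n : ℕ} [NeZero n]

lemma cyc_pair_gen (hn : 3 ≤ n) (heven : n % 2 = 0) (v : Fin n) :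
    GeoGenerates (cycleGraph n) {v, v + ((n / 2 : ℕ) : Fin n)} := by
  set half := n / 2 with hhalf
  apply generates_of
  intro K hSK hK w
  have hv : v ∈ K := hSK (Or.inl rfl)
  have hv' : v + ((half : ℕ) : Fin n) ∈ K := hSK (Or.inr rfl)
  have d1 : ((v + ((half : ℕ) : Fin n)) - v).val = half := val_sub_self_add v half (by omega)
  have d2 : (v - (v + ((half : ℕ) : Fin n))).val = half := by
    have hsum := sub_val_add_sub_val v (v + ((half : ℕ) : Fin n))
    have hne : v ≠ v + ((half : ℕ) : Fin n) := by
      intro h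
      have := congrArg (fun x => (x - v).val) h
      simp only [sub_self, Fin.val_zero, d1] at this
      omega
    have h0 : ((v + ((half : ℕ) : Fin n)) - v).val ≠ 0 := by
      rw [d1]; omega
    omega
  set c := (w - v).val with hc
  have hcn : c < n := (w - v).isLt
  rcases le_or_gt c half with hch | hch
  · have := mem_of_convex hn hK hv hv' (by rw [d1]; omega) c (by rw [d1]; exact hch)
    have hw : w = v + ((c : ℕ) : Fin n) := by rw [hc, Fin.cast_val_eq_self]; ring
    rwa [← hw] at this
  · have := mem_of_convex hn hK hv' hv (by rw [d2]; omega) (c - half) (by rw [d2]; omega)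
    have hw : w = (v + ((half : ℕ) : Fin n)) + (((c - half : ℕ)) : Fin n) := by
      have : ((half : ℕ) : Fin n) + (((c - half : ℕ)) : Fin n) = ((c : ℕ) : Fin n) := by
        rw [← Nat.cast_add]
        congr 1
        omega
      rw [add_assoc, this, hc, Fin.cast_val_eq_self]
      ring
    rwa [← hw] at this
end CycGen2

section CycGen3
variable {n : ℕ} [NeZero n]

lemma cyc_triple_gen (hn : 3 ≤ n) (x : Fin n) (d e : ℕ) (hd1 : 1 ≤ d) (he1 : 1 ≤ e)
    (hde : d + e ≤ n - 1) (hd : 2 * d ≤ n) (he : 2 * e ≤ n) (hf : 2 * (n - d - e) ≤ n) :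
    GeoGenerates (cycleGraph n) {x, x + ((d : ℕ) : Fin n), x + (((d + e : ℕ)) : Fin n)} := by
  apply generates_of
  intro K hSK hK w
  have h1 : x ∈ K := hSK (Or.inl rfl)
  have h2 : x + ((d : ℕ) : Fin n) ∈ K := hSK (Or.inr (Or.inl rfl))
  have h3 : x + (((d + e : ℕ)) : Fin n) ∈ K := hSK (Or.inr (Or.inr rfl))
  have v1 : ((x + ((d : ℕ) : Fin n)) - x).val = d := val_sub_self_add x d (by omega)
  have v2 : ((x + (((d + e : ℕ)) : Fin n)) - (x + ((d : ℕ) : Fin n))).val = e := by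
    have h : (x + (((d + e : ℕ)) : Fin n)) = (x + ((d : ℕ) : Fin n)) + ((e : ℕ) : Fin n) := by
      rw [add_assoc, ← Nat.cast_add]
    rw [h]
    exact val_sub_self_add _ e (by omega)
  have v3 : (x - (x + (((d + e : ℕ)) : Fin n))).val = n - d - e := by
    have h : x = (x + (((d + e : ℕ)) : Fin n)) + (((n - d - e : ℕ)) : Fin n) := by
      rw [add_assoc, ← Nat.cast_add]
      have : ((d + e + (n - d - e) : ℕ) : Fin n) = ((n : ℕ) : Fin n) := by congr 1; omega
      rw [this, Fin.natCast_self, add_zero]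
    nth_rewrite 1 [h]
    exact val_sub_self_add _ (n - d - e) (by omega)
  set c := (w - x).val with hc
  have hcn : c < n := (w - x).isLt
  have hw : w = x + ((c : ℕ) : Fin n) := by rw [hc, Fin.cast_val_eq_self]; ring
  rcases le_or_gt c d with hcd | hcd
  · have := mem_of_convex hn hK h1 h2 (by rw [v1]; omega) c (by omega)
    rwa [← hw] at this
  rcases le_or_gt c (d + e) with hcde | hcde
  · have := mem_of_convex hn hK h2 h3 (by rw [v2]; omega) (c - d) (by omega)
    have hw2 : w = (x + ((d : ℕ) : Fin n)) + (((c - d : ℕ)) : Fin n) := by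
      rw [add_assoc, ← Nat.cast_add, show d + (c - d) = c by omega, hw]
    rwa [← hw2] at this
  · have := mem_of_convex hn hK h3 h1 (by rw [v3]; omega) (c - d - e) (by omega)
    have hw2 : w = (x + (((d + e : ℕ)) : Fin n)) + (((c - d - e : ℕ)) : Fin n) := by
      rw [add_assoc, ← Nat.cast_add, show (d + e) + (c - d - e) = c by omega, hw]
    rwa [← hw2] at this

lemma cyc_pair_extend (hn : 3 ≤ n) (hodd : n % 2 = 1) (u v : Fin n) (huv : u ≠ v) :
    ∃ w : Fin n, w ≠ u ∧ w ≠ v ∧ GeoGenerates (cycleGraph n) {u, v, w} := by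
  -- helper applied in the right orientation
  have aux : ∀ a b : Fin n, 1 ≤ (b - a).val → 2 * (b - a).val < n →
      ∃ w : Fin n, w ≠ a ∧ w ≠ b ∧ GeoGenerates (cycleGraph n) {a, b, w} := by
    intro a b hd1 hdlt
    set d := (b - a).val with hd
    have hdn : d < n := (b - a).isLt
    set e := (n - d) / 2 with he
    refine ⟨a + (((d + e : ℕ)) : Fin n), ?_, ?_, ?_⟩
    · intro h
      have := congrArg (fun z => (z - a).val) h
      simp only [sub_self, Fin.val_zero] at this
      rw [val_sub_self_add a (d + e) (by omega)] at this
      omega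
    · intro h
      have hb : b = a + ((d : ℕ) : Fin n) := by rw [hd, Fin.cast_val_eq_self]; ring
      have := congrArg (fun z => (z - (a + ((d : ℕ) : Fin n))).val) h
      rw [← hb] at this
      simp only [sub_self, Fin.val_zero] at this
      have h2 : (a + (((d + e : ℕ)) : Fin n)) = (a + ((d : ℕ) : Fin n)) + ((e : ℕ) : Fin n) := by
        rw [add_assoc, ← Nat.cast_add]
      rw [hb, h2, val_sub_self_add _ e (by omega)] at this
      omega
    · have hb : b = a + ((d : ℕ) : Fin n) := by rw [hd, Fin.cast_val_eq_self]; ring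
      rw [hb]
      exact cyc_triple_gen hn a d e (by omega) (by omega) (by omega) (by omega) (by omega)
        (by omega)
  have hsum := sub_val_add_sub_val u v
  have hne0 : (v - u).val ≠ 0 := by
    intro h
    apply huv
    have : v - u = 0 := Fin.ext (by simpa using h)
    have := sub_eq_zero.mp this
    exact this.symm
  rcases lt_or_ge (2 * (v - u).val) n with hlt | hge
  · exact aux u v (by omega) hlt
  · have h1 : (u - v).val ≠ 0 := by
      intro h
      apply huv
      have : u - v = 0 := Fin.ext (by simpa using h)
      exact sub_eq_zero.mp this
    have h2 : 2 * (v - u).val ≠ n := by omega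
    have h3 : (v - u).val < n := (v - u).isLt
    obtain ⟨w, hw1, hw2, hw3⟩ := aux v u (by omega) (by omega)
    rw [Set.insert_comm] at hw3
    exact ⟨w, hw2, hw1, hw3⟩
end CycGen3

section GameLayer

lemma natMex_eq_zero {A : Set ℕ} (h : 0 ∉ A) : natMex A = 0 :=
  Nat.sInf_eq_zero.mpr (Or.inl h)

lemma natMex_ne_zero {A : Set ℕ} (h0 : 0 ∈ A) (hfin : A.Finite) : natMex A ≠ 0 := by
  intro h
  have hne : {m : ℕ | m ∉ A}.Nonempty := (hfin.infinite_compl).nonempty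
  have hmem := Nat.sInf_mem hne
  rw [show sInf {m : ℕ | m ∉ A} = natMex A from rfl, h] at hmem
  exact hmem h0

lemma natMex_singleton_zero : natMex ({0} : Set ℕ) = 1 := by
  have h1 : natMex ({0} : Set ℕ) ≤ 1 := Nat.sInf_le (by simp)
  have h2 := natMex_ne_zero (Set.mem_singleton 0) (Set.finite_singleton 0)
  omega

lemma optFinite {α : Type*} [Finite α] (f : α → ℕ) (Q : α → Prop) :
    {m : ℕ | ∃ v, Q v ∧ m = f v}.Finite :=
  Set.Finite.subset (Set.finite_range f) (by rintro m ⟨v, _, rfl⟩; exact ⟨v, rfl⟩)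

variable [Fintype V] [DecidableEq V]

lemma genAux_of_gen (G : SimpleGraph V) {P : Finset V} (h : GeoGenerates G (↑P : Set V))
    (k : ℕ) : genAux G k P = 0 := by
  cases k with
  | zero => rfl
  | succ k => rw [genAux, if_pos h]

lemma genAux_succ_nongen (G : SimpleGraph V) {P : Finset V}
    (h : ¬ GeoGenerates G (↑P : Set V)) (k : ℕ) :
    genAux G (k + 1) P =
      natMex {m : ℕ | ∃ v : V, v ∉ P ∧ m = genAux G k (insert v P)} := by
  rw [genAux, if_neg h]

end GameLayer

/-- For the cycle graph `Cₙ` with `n ≥ 3`, the nim-number of the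
achievement game is `n mod 2`. -/
theorem genNim_cycleGraph (n : ℕ) (hn : 3 ≤ n) :
    genNim (SimpleGraph.cycleGraph n) = n % 2 := by
  haveI : NeZero n := ⟨by omega⟩
  set G := SimpleGraph.cycleGraph n with hG
  -- the value of each singleton position as a mex
  have hsingle : ∀ v : Fin n, genAux G (n - 1) {v} =
      natMex {m : ℕ | ∃ u : Fin n, u ∉ ({v} : Finset (Fin n)) ∧
        m = genAux G (n - 2) (insert u {v})} := by
    intro v
    have e : n - 1 = (n - 2) + 1 := by omega
    rw [e, genAux_succ_nongen]
    rw [Finset.coe_singleton]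
    exact cyc_singleton_nongen hn v
  -- top level
  have hfuel : ∀ P : Finset (Fin n), genAux G (Fintype.card (Fin n)) P
      = genAux G ((n - 1) + 1) P := by
    intro P
    rw [Fintype.card_fin, Nat.sub_add_cancel (by omega)]
  have htop : genNim G = natMex {m : ℕ | ∃ v : Fin n,
      v ∉ (∅ : Finset (Fin n)) ∧ m = genAux G (n - 1) {v}} := by
    rw [genNim, hfuel, genAux_succ_nongen]
    · simp only [LawfulSingleton.insert_empty_eq]
    · rw [Finset.coe_empty]
      exact cyc_empty_nongen hn
  rcases Nat.even_or_odd n with heven | hodd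
  · -- even case : each singleton has nonzero value, so the mex is 0
    have heven' : n % 2 = 0 := Nat.even_iff.mp heven
    have hval1 : ∀ v : Fin n, genAux G (n - 1) {v} ≠ 0 := by
      intro v
      rw [hsingle v]
      apply natMex_ne_zero _ (optFinite _ _)
      refine ⟨v + ((n / 2 : ℕ) : Fin n), ?_, ?_⟩
      · rw [Finset.mem_singleton]
        intro h
        have := congrArg (fun z => (z - v).val) h
        rw [val_sub_self_add v (n / 2) (by omega), sub_self, Fin.val_zero] at this
        omega
      · refine (genAux_of_gen G ?_ _).symm
        rw [Finset.coe_insert, Finset.coe_singleton, Set.pair_comm]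
        exact cyc_pair_gen hn heven' v
    rw [htop, heven', natMex_eq_zero]
    rintro ⟨v, -, h0⟩
    exact hval1 v h0.symm
  · -- odd case : each singleton has value 0, so the mex is 1
    have hodd' : n % 2 = 1 := Nat.odd_iff.mp hodd
    have hval0 : ∀ v : Fin n, genAux G (n - 1) {v} = 0 := by
      intro v
      rw [hsingle v]
      apply natMex_eq_zero
      rintro ⟨u, hu, heq⟩
      have hu' : u ≠ v := by simpa using hu
      have e2 : n - 2 = (n - 3) + 1 := by omega
      rw [e2, genAux_succ_nongen] at heq
      · refine natMex_ne_zero ?_ (optFinite _ _) heq.symm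
        obtain ⟨w, hw1, hw2, hw3⟩ := cyc_pair_extend hn hodd' u v hu'
        refine ⟨w, ?_, ?_⟩
        · simp only [Finset.mem_insert, Finset.mem_singleton]
          tauto
        · refine (genAux_of_gen G ?_ _).symm
          rw [Finset.coe_insert, Finset.coe_insert, Finset.coe_singleton]
          rw [Set.insert_comm, Set.pair_comm w v]
          exact hw3
      · rw [Finset.coe_insert, Finset.coe_singleton]
        exact cyc_pair_nongen hn hodd' u v
    have hT : {m : ℕ | ∃ v : Fin n, v ∉ (∅ : Finset (Fin n)) ∧ m = genAux G (n - 1) {v}}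
        = {0} := by
      ext m
      simp only [Set.mem_setOf_eq, Set.mem_singleton_iff, Finset.notMem_empty,
        not_false_iff, true_and]
      constructor
      · rintro ⟨v, rfl⟩; exact hval0 v
      · rintro rfl; exact ⟨0, (hval0 0).symm⟩
    rw [htop, hT, natMex_singleton_zero, hodd']
end

section
/- For the hypercube graph Qₙ with n ≥ 2, both games are second-player wins: nim(DNG(Qₙ)) = 0 and nim(GEN(Qₙ)) = 0. -/
open SimpleGraph

variable {V : Type*}

variable [Fintype V] [DecidableEq V]

/-- The hypercube graph `Qₙ`: vertices are the binary strings of length `n`, adjacent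
iff they differ in exactly one entry. -/
def hypercubeGraph (n : ℕ) : SimpleGraph (Fin n → Bool) :=
  SimpleGraph.fromRel (fun x y => ∃! i : Fin n, x i ≠ y i)


/-! ### Auxiliary development for the hypercube -/

namespace NimHyperAux

open Finset

variable {V : Type*}

lemma subset_geoHull (G : SimpleGraph V) (S : Set V) : S ⊆ geoHull G S := by
  intro x hx
  rw [geoHull, Set.mem_sInter]
  intro K hK
  exact hK.1 hx

lemma geoConvex_geoHull (G : SimpleGraph V) (S : Set V) : GeoConvex G (geoHull G S) := by
  intro u hu v hv w hw
  rw [geoHull, Set.mem_sInter] at hu hv ⊢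
  intro K hK
  exact hK.2 (hu K hK) (hv K hK) hw

lemma geoHull_subset {G : SimpleGraph V} {S K : Set V} (hS : S ⊆ K) (hK : GeoConvex G K) :
    geoHull G S ⊆ K :=
  Set.sInter_subset_of_mem ⟨hS, hK⟩

lemma geoHull_mono {G : SimpleGraph V} {S T : Set V} (h : S ⊆ T) :
    geoHull G S ⊆ geoHull G T := by
  intro x hx
  rw [geoHull, Set.mem_sInter] at hx ⊢
  intro K hK
  exact hx K ⟨h.trans hK.1, hK.2⟩

lemma nongen_mono {G : SimpleGraph V} {S T : Set V} (hST : S ⊆ T)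
    (hT : ¬ GeoGenerates G T) : ¬ GeoGenerates G S := by
  intro hS
  apply hT
  unfold GeoGenerates at hS ⊢
  apply Set.eq_univ_of_univ_subset
  rw [← hS]
  exact geoHull_mono hST

lemma natMex_eq_zero {A : Set ℕ} (h : 0 ∉ A) : natMex A = 0 :=
  Nat.sInf_eq_zero.mpr (Or.inl h)

lemma natMex_ne_zero {A : Set ℕ} (h0 : 0 ∈ A) {N : ℕ} (hb : ∀ m ∈ A, m < N) :
    natMex A ≠ 0 := by
  have hN : N ∈ {k : ℕ | k ∉ A} := fun hmem => lt_irrefl N (hb N hmem)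
  have hmem := Nat.sInf_mem ⟨N, hN⟩
  intro h
  unfold natMex at h
  rw [h] at hmem
  exact hmem h0

lemma dngAux_succ {W : Type*} [Fintype W] [DecidableEq W] (G : SimpleGraph W)
    (k : ℕ) (P : Finset W) :
    dngAux G (k + 1) P = natMex {m : ℕ | ∃ v : W, v ∉ P ∧
      ¬ GeoGenerates G (↑(insert v P) : Set W) ∧ m = dngAux G k (insert v P)} := rfl

open scoped Classical in
lemma genAux_succ {W : Type*} [Fintype W] [DecidableEq W] (G : SimpleGraph W)
    (k : ℕ) (P : Finset W) :
    genAux G (k + 1) P = if GeoGenerates G (↑P : Set W) then 0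
      else natMex {m : ℕ | ∃ v : W, v ∉ P ∧ m = genAux G k (insert v P)} := rfl

variable {n : ℕ}

/-- Hamming distance as a sum of indicators. -/
def ham (u v : Fin n → Bool) : ℕ := ∑ j, if u j = v j then 0 else 1

lemma ham_self (u : Fin n → Bool) : ham u u = 0 := by simp [ham]

lemma ham_comm (u v : Fin n → Bool) : ham u v = ham v u := by
  unfold ham
  refine Finset.sum_congr rfl fun j _ => ?_
  by_cases h : u j = v j
  · rw [if_pos h, if_pos h.symm]
  · rw [if_neg h, if_neg (fun hh => h hh.symm)]

lemma ham_eq_zero_iff {u v : Fin n → Bool} : ham u v = 0 ↔ u = v := by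
  constructor
  · intro h
    funext j
    by_contra hj
    have := (Finset.sum_eq_zero_iff).mp h j (mem_univ j)
    rw [if_neg hj] at this
    exact one_ne_zero this
  · rintro rfl; exact ham_self u

lemma ite_tri (a b c : Bool) :
    (if a = c then 0 else 1) ≤ (if a = b then 0 else 1) + (if b = c then 0 else 1) := by
  cases a <;> cases b <;> cases c <;> simp

lemma ham_triangle (u w v : Fin n → Bool) : ham u v ≤ ham u w + ham w v := by
  unfold ham
  rw [← Finset.sum_add_distrib]
  exact Finset.sum_le_sum fun j _ => ite_tri (u j) (w j) (v j)

lemma ham_between {u v w : Fin n → Bool} (h : ∀ j, u j = v j → w j = u j) :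
    ham u w + ham w v = ham u v := by
  unfold ham
  rw [← Finset.sum_add_distrib]
  refine Finset.sum_congr rfl fun j _ => ?_
  have hj := h j
  cases hu : u j <;> cases hv : v j <;> cases hw : w j <;> simp_all

lemma adj_update {u : Fin n → Bool} {i : Fin n} {b : Bool} (h : b ≠ u i) :
    (hypercubeGraph n).Adj u (Function.update u i b) := by
  unfold hypercubeGraph
  rw [SimpleGraph.fromRel_adj]
  have hne : u ≠ Function.update u i b := by
    intro he
    have := congrFun he i
    rw [Function.update_self] at this
    exact h this.symm
  refine ⟨hne, Or.inl ⟨i, ?_, ?_⟩⟩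
  · show u i ≠ Function.update u i b i
    rw [Function.update_self]
    exact fun hh => h hh.symm
  · intro y hy
    by_contra hyi
    rw [Function.update_of_ne hyi] at hy
    exact hy rfl

lemma ham_update {u v : Fin n → Bool} {i : Fin n} (h : u i ≠ v i) :
    ham (Function.update u i (v i)) v + 1 = ham u v := by
  unfold ham
  rw [← Finset.sum_erase_add _ _ (mem_univ i), ← Finset.sum_erase_add _ _ (mem_univ i)]
  rw [Function.update_self, if_pos rfl, if_neg h]
  have hsum : ∑ j ∈ univ.erase i, (if Function.update u i (v i) j = v j then 0 else 1)
      = ∑ j ∈ univ.erase i, (if u j = v j then 0 else 1) := by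
    refine Finset.sum_congr rfl fun j hj => ?_
    rw [Function.update_of_ne (Finset.ne_of_mem_erase hj)]
  omega

lemma exists_walk_ham : ∀ (d : ℕ) (u v : Fin n → Bool), ham u v = d →
    ∃ p : (hypercubeGraph n).Walk u v, p.length = d := by
  intro d
  induction d with
  | zero =>
    intro u v h
    obtain rfl := ham_eq_zero_iff.mp h
    exact ⟨SimpleGraph.Walk.nil, rfl⟩
  | succ d ih =>
    intro u v h
    have hne : ∃ i, u i ≠ v i := by
      by_contra hc
      push_neg at hc
      rw [ham_eq_zero_iff.mpr (funext hc)] at h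
      exact Nat.succ_ne_zero d h.symm
    obtain ⟨i, hi⟩ := hne
    have hd : ham (Function.update u i (v i)) v = d := by
      have := ham_update hi
      omega
    obtain ⟨p, hp⟩ := ih _ _ hd
    refine ⟨SimpleGraph.Walk.cons (adj_update (Ne.symm hi)) p, ?_⟩
    rw [SimpleGraph.Walk.length_cons, hp]

lemma ham_le_one_of_uniq {u v : Fin n → Bool} (h : ∃! i : Fin n, u i ≠ v i) :
    ham u v ≤ 1 := by
  obtain ⟨i, -, hu⟩ := h
  unfold ham
  rw [Finset.sum_eq_single i (fun j _ hj => if_pos (by by_contra hc; exact hj (hu j hc)))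
    (fun hi => absurd (mem_univ i) hi)]
  split <;> omega

lemma ham_le_one_of_adj {u v : Fin n → Bool} (h : (hypercubeGraph n).Adj u v) :
    ham u v ≤ 1 := by
  unfold hypercubeGraph at h
  rw [SimpleGraph.fromRel_adj] at h
  obtain ⟨-, h | h⟩ := h
  · exact ham_le_one_of_uniq h
  · rw [ham_comm]; exact ham_le_one_of_uniq h

lemma ham_le_length {u v : Fin n → Bool} (p : (hypercubeGraph n).Walk u v) :
    ham u v ≤ p.length := by
  induction p with
  | nil => simp [ham_self]
  | @cons u x v h q ih =>
    calc ham u v ≤ ham u x + ham x v := ham_triangle u x v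
      _ ≤ 1 + q.length := Nat.add_le_add (ham_le_one_of_adj h) ih
      _ = (SimpleGraph.Walk.cons h q).length := by
          rw [SimpleGraph.Walk.length_cons, Nat.add_comm]

lemma dist_eq_ham (u v : Fin n → Bool) : (hypercubeGraph n).dist u v = ham u v := by
  obtain ⟨p, hp⟩ := exists_walk_ham (ham u v) u v rfl
  refine le_antisymm (hp ▸ SimpleGraph.dist_le p) ?_
  obtain ⟨q, hq⟩ := SimpleGraph.Reachable.exists_walk_length_eq_dist ⟨p⟩
  calc ham u v ≤ q.length := ham_le_length q
    _ = (hypercubeGraph n).dist u v := hq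

lemma onGeodesic_of_between {u v w : Fin n → Bool} (h : ∀ j, u j = v j → w j = u j) :
    OnGeodesic (hypercubeGraph n) u v w := by
  obtain ⟨p1, hp1⟩ := exists_walk_ham (ham u w) u w rfl
  obtain ⟨p2, hp2⟩ := exists_walk_ham (ham w v) w v rfl
  have hlen : (p1.append p2).length = (hypercubeGraph n).dist u v := by
    rw [SimpleGraph.Walk.length_append, hp1, hp2, ham_between h, dist_eq_ham]
  refine ⟨p1.append p2, SimpleGraph.Walk.isPath_of_length_eq_dist _ hlen, hlen, ?_⟩
  rw [SimpleGraph.Walk.mem_support_append_iff]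
  exact Or.inl p1.end_mem_support

lemma between_of_onGeodesic {u v w : Fin n → Bool}
    (h : OnGeodesic (hypercubeGraph n) u v w) :
    ∀ j, u j = v j → w j = u j := by
  obtain ⟨p, hp, hlen, hw⟩ := h
  have hsplit : (p.takeUntil w hw).length + (p.dropUntil w hw).length = p.length := by
    rw [← SimpleGraph.Walk.length_append, SimpleGraph.Walk.take_spec]
  have h1 := ham_le_length (p.takeUntil w hw)
  have h2 := ham_le_length (p.dropUntil w hw)
  have htri := ham_triangle u w v
  rw [dist_eq_ham] at hlen
  have heq : ham u w + ham w v = ham u v := by omega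
  have hsum : ∑ j, (if u j = v j then 0 else 1)
      = ∑ j, ((if u j = w j then 0 else 1) + (if w j = v j then 0 else 1)) := by
    rw [Finset.sum_add_distrib]
    exact heq.symm
  have hpoint := (Finset.sum_eq_sum_iff_of_le
    (fun j _ => ite_tri (u j) (w j) (v j))).mp hsum
  intro j hj
  have hpt := hpoint j (mem_univ j)
  rw [if_pos hj] at hpt
  by_contra hc
  rw [if_neg (fun hh => hc hh.symm)] at hpt
  omega

lemma gen_of_full (hn : 1 ≤ n) (S : Set (Fin n → Bool))
    (h : ∀ i : Fin n, ∃ x ∈ S, ∃ y ∈ S, x i ≠ y i) :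
    GeoGenerates (hypercubeGraph n) S := by
  have hSH : S ⊆ geoHull (hypercubeGraph n) S := subset_geoHull _ _
  have hconv : GeoConvex (hypercubeGraph n) (geoHull (hypercubeGraph n) S) :=
    geoConvex_geoHull _ _
  have hflip : ∀ p ∈ geoHull (hypercubeGraph n) S, ∀ i : Fin n,
      Function.update p i (!(p i)) ∈ geoHull (hypercubeGraph n) S := by
    intro p hp i
    obtain ⟨x, hx, y, hy, hxy⟩ := h i
    have hz : ∃ z ∈ geoHull (hypercubeGraph n) S, z i ≠ p i := by
      by_cases hxp : x i = p i
      · exact ⟨y, hSH hy, fun hyp => hxy (hxp.trans hyp.symm)⟩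
      · exact ⟨x, hSH hx, hxp⟩
    obtain ⟨z, hz, hzp⟩ := hz
    apply hconv hp hz
    apply onGeodesic_of_between
    intro j hj
    by_cases hji : j = i
    · subst hji
      exact absurd hj.symm hzp
    · rw [Function.update_of_ne hji]
  obtain ⟨y₀, hy₀⟩ : S.Nonempty := by
    obtain ⟨x, hx, -⟩ := h ⟨0, hn⟩
    exact ⟨x, hx⟩
  have key : ∀ d, ∀ x : Fin n → Bool, ham y₀ x ≤ d →
      x ∈ geoHull (hypercubeGraph n) S := by
    intro d
    induction d with
    | zero =>
      intro x hx
      have hyx : y₀ = x := ham_eq_zero_iff.mp (Nat.le_zero.mp hx)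
      exact hyx ▸ hSH hy₀
    | succ d ih =>
      intro x hx
      by_cases hle : ham y₀ x ≤ d
      · exact ih x hle
      · have hpos : ham y₀ x ≠ 0 := by omega
        have hne : ∃ i, y₀ i ≠ x i := by
          by_contra hc
          push_neg at hc
          exact hpos (ham_eq_zero_iff.mpr (funext hc))
        obtain ⟨i, hi⟩ := hne
        have hx' : ham y₀ (Function.update x i (y₀ i)) ≤ d := by
          have h1 : ham (Function.update x i (y₀ i)) y₀ + 1 = ham x y₀ :=
            ham_update (fun hh => hi hh.symm)
          have h2 := ham_comm y₀ x
          have h3 := ham_comm y₀ (Function.update x i (y₀ i))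
          omega
        have hmem := ih _ hx'
        have hxx : x = Function.update (Function.update x i (y₀ i)) i
            (!((Function.update x i (y₀ i)) i)) := by
          funext j
          by_cases hji : j = i
          · subst hji
            rw [Function.update_self, Function.update_self]
            cases hxj : x j <;> cases hyj : y₀ j <;> simp_all
          · rw [Function.update_of_ne hji, Function.update_of_ne hji]
        rw [hxx]
        exact hflip _ hmem i
  exact Set.eq_univ_of_forall fun x => key (ham y₀ x) x le_rfl

/-- The facet of the hypercube fixing coordinate `i` to `b`. -/
def facet (n : ℕ) (i : Fin n) (b : Bool) : Finset (Fin n → Bool) :=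
  Finset.univ.filter (fun x => x i = b)

lemma facet_coe (i : Fin n) (b : Bool) :
    (↑(facet n i b) : Set (Fin n → Bool)) = {x | x i = b} := by
  ext x; simp [facet]

lemma facet_convex {i : Fin n} {b : Bool} :
    GeoConvex (hypercubeGraph n) {x | x i = b} := by
  intro u hu v hv w hw
  have hb := between_of_onGeodesic hw i (hu.trans hv.symm)
  simp only [Set.mem_setOf_eq] at hu hv ⊢
  rw [hb]
  exact hu

lemma facet_nongen {i : Fin n} {b : Bool} :
    ¬ GeoGenerates (hypercubeGraph n) {x | x i = b} := by
  intro hgen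
  have hsub : geoHull (hypercubeGraph n) {x | x i = b} ⊆ {x | x i = b} :=
    geoHull_subset (subset_refl _) facet_convex
  unfold GeoGenerates at hgen
  have hmem : (fun _ => !b : Fin n → Bool) ∈ {x : Fin n → Bool | x i = b} :=
    hsub (hgen ▸ Set.mem_univ _)
  simp at hmem

lemma nongen_subset_facet (hn : 1 ≤ n) {S : Set (Fin n → Bool)}
    (h : ¬ GeoGenerates (hypercubeGraph n) S) : ∃ i b, ∀ x ∈ S, x i = b := by
  by_contra hc
  push_neg at hc
  apply h
  apply gen_of_full hn
  intro i
  obtain ⟨x, hx, hxb⟩ := hc i true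
  obtain ⟨y, hy, hyb⟩ := hc i false
  exact ⟨x, hx, y, hy, by cases hxi : x i <;> cases hyi : y i <;> simp_all⟩

lemma facet_card_even (hn : 2 ≤ n) (i : Fin n) (b : Bool) :
    Even (facet n i b).card := by
  classical
  have hbij : (facet n i b).card
      = (Finset.univ.filter (fun x : Fin n → Bool => ¬ (x i = b))).card := by
    refine Finset.card_bij' (fun x _ => Function.update x i (!b))
      (fun x _ => Function.update x i b) ?hi ?hj ?left ?right
    case hi =>
      intro a ha
      simp [Finset.mem_filter, Function.update_self]
    case hj =>
      intro a ha
      simp [facet, Finset.mem_filter, Function.update_self]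
    case left =>
      intro a ha
      simp only [facet, Finset.mem_filter, Finset.mem_univ, true_and] at ha
      funext j
      by_cases hji : j = i
      · subst hji
        simp [Function.update_self, ha]
      · simp [Function.update_of_ne hji]
    case right =>
      intro a ha
      simp only [Finset.mem_filter, Finset.mem_univ, true_and] at ha
      funext j
      by_cases hji : j = i
      · subst hji
        simp only [Function.update_self]
        cases hb : a j <;> cases b <;> simp_all
      · simp [Function.update_of_ne hji]
  have hcard : (facet n i b).card
      + (Finset.univ.filter (fun x : Fin n → Bool => ¬ (x i = b))).card
      = Fintype.card (Fin n → Bool) := by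
    rw [← Finset.card_univ]
    exact Finset.card_filter_add_card_filter_not _
  have hpow : Fintype.card (Fin n → Bool) = 2 ^ n := by
    rw [Fintype.card_fun]
    simp
  have hsplit : 2 ^ n = 2 * 2 ^ (n - 1) := by
    calc 2 ^ n = 2 ^ (n - 1 + 1) := by rw [Nat.sub_add_cancel (Nat.one_le_of_lt hn)]
      _ = 2 ^ (n - 1) * 2 := pow_succ 2 (n - 1)
      _ = 2 * 2 ^ (n - 1) := Nat.mul_comm _ _
  have h2 : 2 * (facet n i b).card = 2 ^ n := by
    rw [two_mul]
    nth_rewrite 2 [hbij]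
    rw [hcard, hpow]
  have hc : (facet n i b).card = 2 ^ (n - 1) :=
    Nat.eq_of_mul_eq_mul_left (by norm_num) (h2.trans hsplit)
  rw [hc]
  exact Nat.even_pow.mpr ⟨even_two, Nat.sub_ne_zero_of_lt hn⟩

lemma dng_main (hn : 2 ≤ n) :
    ∀ k (P : Finset (Fin n → Bool)),
    ¬ GeoGenerates (hypercubeGraph n) (↑P : Set (Fin n → Bool)) →
    Fintype.card (Fin n → Bool) - P.card ≤ k →
    (Even P.card → dngAux (hypercubeGraph n) k P = 0) ∧
    (Odd P.card → dngAux (hypercubeGraph n) k P ≠ 0) := by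
  intro k
  induction k with
  | zero =>
    intro P hP hfuel
    exfalso
    have hPne : P ≠ Finset.univ := by
      rintro rfl
      apply hP
      unfold GeoGenerates
      apply Set.eq_univ_of_univ_subset
      rw [Finset.coe_univ]
      exact subset_geoHull _ _
    have hlt : P.card < Fintype.card (Fin n → Bool) := by
      rcases (Finset.card_le_univ P).lt_or_eq with h | h
      · simpa using h
      · exact absurd ((Finset.card_eq_iff_eq_univ P).mp (by simpa using h)) hPne
    omega
  | succ k ih =>
    intro P hP hfuel
    have hPlt : P.card < Fintype.card (Fin n → Bool) := by
      have hPne : P ≠ Finset.univ := by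
        rintro rfl
        apply hP
        unfold GeoGenerates
        apply Set.eq_univ_of_univ_subset
        rw [Finset.coe_univ]
        exact subset_geoHull _ _
      rcases (Finset.card_le_univ P).lt_or_eq with h | h
      · simpa using h
      · exact absurd ((Finset.card_eq_iff_eq_univ P).mp (by simpa using h)) hPne
    constructor
    · intro heven
      rw [dngAux_succ]
      apply natMex_eq_zero
      rintro ⟨v, hv, hng, hzero⟩
      have hcard : (insert v P).card = P.card + 1 := Finset.card_insert_of_notMem hv
      have hfuel' : Fintype.card (Fin n → Bool) - (insert v P).card ≤ k := by omega
      have hodd : Odd (insert v P).card := by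
        rw [hcard]; exact heven.add_one
      exact (ih (insert v P) hng hfuel').2 hodd hzero.symm
    · intro hodd
      rw [dngAux_succ]
      obtain ⟨i, b, hfb⟩ := nongen_subset_facet (by omega) hP
      have hPF : P ⊆ facet n i b := fun x hx =>
        Finset.mem_filter.mpr ⟨Finset.mem_univ x, hfb x (Finset.mem_coe.mpr hx)⟩
      have hPne : P ≠ facet n i b := by
        intro hEq
        rw [hEq] at hodd
        exact (Nat.not_odd_iff_even.mpr (facet_card_even hn i b)) hodd
      obtain ⟨v, hvF, hvP⟩ :=
        Finset.exists_of_ssubset (Finset.ssubset_iff_subset_ne.mpr ⟨hPF, hPne⟩)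
      have hins : insert v P ⊆ facet n i b := Finset.insert_subset hvF hPF
      have hng : ¬ GeoGenerates (hypercubeGraph n) (↑(insert v P) : Set (Fin n → Bool)) := by
        apply nongen_mono _ (facet_nongen (i := i) (b := b))
        rw [← facet_coe]
        exact Finset.coe_subset.mpr hins
      have hcard : (insert v P).card = P.card + 1 := Finset.card_insert_of_notMem hvP
      have hfuel' : Fintype.card (Fin n → Bool) - (insert v P).card ≤ k := by omega
      have heven : Even (insert v P).card := by
        rw [hcard]; exact hodd.add_one
      have hzero := (ih (insert v P) hng hfuel').1 heven
      refine natMex_ne_zero ⟨v, hvP, hng, hzero.symm⟩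
        (N := (Finset.univ.sup (fun w => dngAux (hypercubeGraph n) k (insert w P))) + 1) ?_
      rintro m ⟨w, hw, -, hmw⟩
      calc m = dngAux (hypercubeGraph n) k (insert w P) := hmw
        _ ≤ Finset.univ.sup (fun w => dngAux (hypercubeGraph n) k (insert w P)) :=
            Finset.le_sup (f := fun w => dngAux (hypercubeGraph n) k (insert w P))
              (Finset.mem_univ w)
        _ < _ + 1 := Nat.lt_succ_self _

lemma empty_nongen (hn : 2 ≤ n) :
    ¬ GeoGenerates (hypercubeGraph n) (↑(∅ : Finset (Fin n → Bool)) : Set (Fin n → Bool)) := by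
  rw [Finset.coe_empty]
  exact nongen_mono (Set.empty_subset _) (facet_nongen (i := ⟨0, by omega⟩) (b := true))

lemma dng_zero (hn : 2 ≤ n) : dngNim (hypercubeGraph n) = 0 := by
  exact (dng_main hn (Fintype.card (Fin n → Bool)) ∅ (empty_nongen hn) (by simp)).1
    (by simp)

lemma gen_zero (hn : 2 ≤ n) : genNim (hypercubeGraph n) = 0 := by
  classical
  have h0n : 0 < n := by omega
  have h1n : 1 ≤ n := by omega
  have hpow : Fintype.card (Fin n → Bool) = 2 ^ n := by
    rw [Fintype.card_fun]; simp
  have h4 : 4 ≤ Fintype.card (Fin n → Bool) := by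
    rw [hpow]
    calc (4 : ℕ) = 2 ^ 2 := rfl
      _ ≤ 2 ^ n := Nat.pow_le_pow_right (by omega) hn
  obtain ⟨m, hm⟩ : ∃ m, Fintype.card (Fin n → Bool) = m + 1 :=
    ⟨Fintype.card (Fin n → Bool) - 1, by omega⟩
  obtain ⟨m', hm'⟩ : ∃ m', m = m' + 1 := ⟨m - 1, by omega⟩
  unfold genNim
  rw [hm, genAux_succ, if_neg (empty_nongen hn)]
  apply natMex_eq_zero
  rintro ⟨v, -, hv0⟩
  rw [hm'] at hv0
  have hngv : ¬ GeoGenerates (hypercubeGraph n)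
      (↑(insert v (∅ : Finset (Fin n → Bool))) : Set (Fin n → Bool)) := by
    apply nongen_mono _ (facet_nongen (i := ⟨0, h0n⟩) (b := v ⟨0, h0n⟩))
    intro x hx
    simp only [Finset.coe_insert, Finset.coe_empty] at hx
    have hxv : x = v := by
      rcases hx with hx | hx
      · exact hx
      · exact absurd hx (Set.notMem_empty x)
    subst hxv
    rfl
  set wbar : Fin n → Bool := fun j => !(v j) with hwbar
  have hwne : wbar ∉ insert v (∅ : Finset (Fin n → Bool)) := by
    simp only [Finset.mem_insert, Finset.notMem_empty, or_false]
    intro heq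
    have hcf := congrFun heq (⟨0, h0n⟩ : Fin n)
    simp [hwbar] at hcf
  have hgen : GeoGenerates (hypercubeGraph n)
      (↑(insert wbar (insert v (∅ : Finset (Fin n → Bool)))) : Set (Fin n → Bool)) := by
    apply gen_of_full h1n
    intro i
    refine ⟨wbar, ?_, v, ?_, by simp [hwbar]⟩
    · simp
    · simp
  have hval : genAux (hypercubeGraph n) m' (insert wbar (insert v ∅)) = 0 := by
    rcases m' with _ | t
    · rfl
    · rw [genAux_succ, if_pos hgen]
  rw [genAux_succ, if_neg hngv] at hv0
  refine absurd hv0.symm (natMex_ne_zero ?_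
    (N := (Finset.univ.sup (fun w => genAux (hypercubeGraph n) m'
      (insert w (insert v ∅)))) + 1) ?_)
  · exact ⟨wbar, hwne, hval.symm⟩
  rintro r ⟨w, hw, hrw⟩
  calc r = genAux (hypercubeGraph n) m' (insert w (insert v ∅)) := hrw
    _ ≤ Finset.univ.sup (fun w => genAux (hypercubeGraph n) m' (insert w (insert v ∅))) :=
        Finset.le_sup (f := fun w => genAux (hypercubeGraph n) m' (insert w (insert v ∅)))
          (Finset.mem_univ w)
    _ < _ + 1 := Nat.lt_succ_self _

end NimHyperAux

/-- For the hypercube graph `Qₙ` with `n ≥ 2`, both games are second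
player wins: `nim(DNG(Qₙ)) = 0 = nim(GEN(Qₙ))`. -/
theorem nim_hypercube (n : ℕ) (hn : 2 ≤ n) :
    dngNim (hypercubeGraph n) = 0 ∧ genNim (hypercubeGraph n) = 0 := by
  exact ⟨NimHyperAux.dng_zero hn, NimHyperAux.gen_zero hn⟩
end
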